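/- arXiv:2510.23634 — 12 statements merged into one kernel-verified Lean document; each statement's English description precedes it below -/
import Mathlib

section
/- Let V be a finite ground set with |V| = n, and let F map finite multisets over V (of arbitrary finite cardinality) to ℝ^m. If F is a MAS function, then m ≥ n. -/
/-- If `V` is a finite ground set with `|V| = n` and `F` maps finite multisets over `V`
to `ℝ^m`, and `F` is MAS (monotone and separating), then `m ≥ n`. -/
theorem stmt1 (V : Type*) [Fintype V] (n m : ℕ) (hV : Fintype.card V = n)
    (F : Multiset V → Fin m → ℝ)
    (hmono : ∀ S T : Multiset V, S ≤ T → F S ≤ F T)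
    (hsep : ∀ S T : Multiset V, F S ≤ F T → S ≤ T) :
    n ≤ m := by
  classical
  -- complement multiset
  set U : Multiset V := (Finset.univ : Finset V).val with hU
  have hkey : ∀ v : V, ∃ i : Fin m, F (U.erase v) i < F {v} i := by
    intro v
    by_contra h
    push_neg at h
    have hle : F {v} ≤ F (U.erase v) := fun i => h i
    have := hsep _ _ hle
    have hv : v ∈ U.erase v := by
      have := Multiset.singleton_le.mp this
      exact this
    exact (Multiset.Nodup.notMem_erase (Finset.univ.nodup)) hv
  choose g hg using hkey
  have hinj : Function.Injective g := by
    intro v w hvw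
    by_contra hne
    have h1 : F {w} ≤ F (U.erase v) :=
      hmono _ _ (Multiset.singleton_le.mpr (by
        exact Multiset.mem_erase_of_ne (fun h => hne h.symm) |>.mpr (Finset.mem_univ w)))
    have h2 : F {v} ≤ F (U.erase w) :=
      hmono _ _ (Multiset.singleton_le.mpr (by
        exact Multiset.mem_erase_of_ne hne |>.mpr (Finset.mem_univ v)))
    have c1 := hg v
    have c2 := hg w
    rw [hvw] at c1
    have : F {v} (g w) < F {v} (g w) :=
      lt_of_le_of_lt (le_trans (h2 (g w)) (le_of_lt c2)) (lt_of_le_of_lt (h1 (g w)) c1)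
    exact lt_irrefl _ this
  calc n = Fintype.card V := hV.symm
    _ ≤ Fintype.card (Fin m) := Fintype.card_le_of_injective g hinj
    _ = m := Fintype.card_fin m
end

section
/- Let k < n be natural numbers and let V be a ground set with |V| = n. For every natural number m with m ≥ (k+2)^{k+2} · ln(n), there exists a MAS function F from the multisets over V of cardinality at most k to ℝ^m. -/
/-!
Colour `V` with `r + 1` colours and say that a colouring `f` isolates `v` from `D` if
`f v = 0` while `f` does not vanish on `D`. Every colouring gives the monotone coordinate
`S ↦ #{u ∈ S | f u = 0}`. If `S ⊄ T`, pick `v` with more copies in `S` than in `T` and let `D`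
be the rest of the support of `S + T`, so `|D| ≤ 2k - 1`: a colouring with `2k` colours that
isolates `v` from `D` counts exactly the copies of `v`, hence separates `S` from `T`.

A uniform colouring isolates a given pair with probability `r^|D| / (r+1)^(|D|+1) ≥ 1/(r+1)^2`
(Bernoulli's inequality), so by the union bound over the at most `n^(r+2)` pairs, some `m`
colourings isolate every pair as soon as `n^(r+2) (1 - 1/(r+1)^2)^m < 1`. For `r + 1 = 2k` this
follows from `m ≥ (k+2)^(k+2) ln n`, since `4k^2 (2k+1) < (k+2)^(k+2)`.
-/

open Finset

theorem succ_pow_le_succ_mul_pow {d r : ℕ} (h : d ≤ r) : (r + 1) ^ d ≤ (r + 1) * r ^ d := by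
  have hr : (0 : ℝ) < r + 1 := by positivity
  have hd : (d : ℝ) ≤ r := by exact_mod_cast h
  have bernoulli : 1 - d / ((r : ℝ) + 1) ≤ (r / (r + 1)) ^ d := by
    have hr1 : (1 : ℝ) ≤ r + 1 := by linarith [(r.cast_nonneg : (0 : ℝ) ≤ r)]
    have := one_add_mul_le_pow (a := -1 / ((r : ℝ) + 1))
      (by rw [neg_div, neg_le_neg_iff, div_le_iff₀ hr]; linarith) d
    rw [show 1 + -1 / ((r : ℝ) + 1) = r / (r + 1) by field_simp; ring] at this
    linarith [show (d : ℝ) * (-1 / (r + 1)) = -(d / (r + 1)) by ring]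
  have : ((r : ℝ) + 1) ^ d ≤ (r + 1) * r ^ d := calc
    ((r : ℝ) + 1) ^ d ≤ (r + 1 - d) * (r + 1) ^ d :=
        le_mul_of_one_le_left (by positivity) (by linarith)
    _ = (r + 1) * ((1 - d / (r + 1)) * (r + 1) ^ d) := by field_simp
    _ ≤ (r + 1) * ((r / (r + 1)) ^ d * (r + 1) ^ d) := by gcongr
    _ = (r + 1) * r ^ d := by rw [div_pow, div_mul_cancel₀ _ (by positivity)]
  exact_mod_cast this

theorem exists_forall_exists_notMem {α ι : Type*} [Fintype α] [Nonempty α] [DecidableEq α]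
    (P : Finset ι) (bad : ι → Finset α) {q : ℝ} (m : ℕ)
    (hbad : ∀ p ∈ P, (#(bad p) : ℝ) ≤ q * Fintype.card α) (hP : #P * q ^ m < 1) :
    ∃ fs : Fin m → α, ∀ p ∈ P, ∃ i, fs i ∉ bad p := by
  set B := P.biUnion fun p => Fintype.piFinset fun _ : Fin m => bad p
  have hB : (#B : ℝ) < (Fintype.card α) ^ m := calc
    (#B : ℝ) ≤ ∑ p ∈ P, (#(bad p) : ℝ) ^ m := by
      exact_mod_cast card_biUnion_le.trans_eq (by simp [Fintype.card_piFinset])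
    _ ≤ ∑ p ∈ P, (q * Fintype.card α) ^ m :=
      sum_le_sum fun p hp => pow_le_pow_left₀ (by positivity) (hbad p hp) m
    _ = #P * q ^ m * (Fintype.card α) ^ m := by rw [sum_const, nsmul_eq_mul, mul_pow, mul_assoc]
    _ < (Fintype.card α) ^ m := mul_lt_of_lt_one_left (by positivity) hP
  obtain ⟨fs, -, hfs⟩ := exists_mem_notMem_of_card_lt_card (s := B) (t := univ)
    (by rw [card_univ, Fintype.card_fun, Fintype.card_fin]; exact_mod_cast hB)
  refine ⟨fs, fun p hp => ?_⟩
  by_contra! h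
  exact hfs (mem_biUnion.2 ⟨p, hp, Fintype.mem_piFinset.2 h⟩)

theorem card_filter_card_le_le_sum_pow (V : Type*) [Fintype V] (r : ℕ) :
    #{D : Finset V | #D ≤ r} ≤ ∑ i ∈ range (r + 1), Fintype.card V ^ i := by
  classical
  calc #{D : Finset V | #D ≤ r} ≤ #((range (r + 1)).biUnion fun i => powersetCard i univ) := by
        refine card_le_card fun D hD =>
          mem_biUnion.2 ⟨#D, ?_, mem_powersetCard.2 ⟨subset_univ D, rfl⟩⟩
        simpa [Nat.lt_succ_iff] using hD
    _ ≤ ∑ i ∈ range (r + 1), #(powersetCard i (univ : Finset V)) := card_biUnion_le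
    _ ≤ ∑ i ∈ range (r + 1), Fintype.card V ^ i := by
        simp only [card_powersetCard, card_univ]
        exact sum_le_sum fun i _ => Nat.choose_le_pow _ _

section Isolation

variable {V : Type*} {r : ℕ}

def Isolates (f : V → Fin (r + 1)) (v : V) (D : Finset V) : Prop :=
  f v = 0 ∧ ∀ u ∈ D, f u ≠ 0

instance (f : V → Fin (r + 1)) (v : V) (D : Finset V) : Decidable (Isolates f v D) :=
  inferInstanceAs (Decidable (_ ∧ _))

variable [DecidableEq V]

theorem card_filter_eq_count_of_isolates {f : V → Fin (r + 1)} {v : V} {D : Finset V}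
    (hf : Isolates f v D) {S : Multiset V} (hS : ∀ u ∈ S, u ≠ v → u ∈ D) :
    Multiset.card (S.filter (f · = 0)) = S.count v := by
  rw [Multiset.count_eq_card_filter_eq]
  congr 1
  refine Multiset.filter_congr fun u hu => ⟨fun hu0 => ?_, fun hvu => hvu ▸ hf.1⟩
  by_contra hvu
  exact hf.2 u (hS u hu (Ne.symm hvu)) hu0

theorem le_of_forall_card_filter_le {ι : Type*} {fs : ι → V → Fin (r + 1)}
    (hfs : ∀ v D, v ∉ D → #D ≤ r → ∃ i, Isolates (fs i) v D)
    {S T : Multiset V} (hcard : Multiset.card S + Multiset.card T ≤ r + 1)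
    (hle : ∀ i, Multiset.card (S.filter (fs i · = 0)) ≤
      Multiset.card (T.filter (fs i · = 0))) :
    S ≤ T := by
  rw [Multiset.le_iff_count]
  intro v
  rcases Nat.eq_zero_or_pos (S.count v) with hv0 | hvS
  · simp [hv0]
  set D := (S + T).toFinset.erase v
  have hD : #D ≤ r := by
    have := Multiset.toFinset_card_le (S + T)
    rw [card_erase_of_mem (by simpa using Or.inl (Multiset.count_pos.1 hvS))]
    rw [Multiset.card_add] at this
    omega
  have hsupp : ∀ M ≤ S + T, ∀ u ∈ M, u ≠ v → u ∈ D := fun M hM u hu huv =>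
    mem_erase.2 ⟨huv, Multiset.mem_toFinset.2 (Multiset.mem_of_le hM hu)⟩
  obtain ⟨i, hi⟩ := hfs v D (notMem_erase v _) hD
  simpa [card_filter_eq_count_of_isolates hi (hsupp S (Multiset.le_add_right S T)),
    card_filter_eq_count_of_isolates hi (hsupp T (Multiset.le_add_left T S))] using hle i

variable [Fintype V]

theorem card_isolates {v : V} {D : Finset V} (hv : v ∉ D) :
    #{f : V → Fin (r + 1) | Isolates f v D} = r ^ #D * (r + 1) ^ (Fintype.card V - (#D + 1)) := by
  set allowed : V → Finset (Fin (r + 1)) :=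
    fun u => if u = v then {0} else if u ∈ D then {0}ᶜ else univ
  have hfilter :
      ({f | Isolates f v D} : Finset (V → Fin (r + 1))) = Fintype.piFinset allowed := by
    ext f
    rw [mem_filter, Fintype.mem_piFinset]
    simp only [mem_univ, true_and, Isolates, allowed]
    constructor
    · rintro ⟨hfv, hfD⟩ u
      split_ifs with huv huD
      · simpa [huv] using hfv
      · simpa using hfD u huD
      · exact mem_univ _
    · intro hf
      refine ⟨by simpa using hf v, fun u hu => ?_⟩
      simpa [ne_of_mem_of_not_mem hu hv, hu] using hf u
  rw [hfilter, Fintype.card_piFinset, ← prod_mul_prod_compl (insert v D), prod_insert hv]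
  have hD : ∀ u ∈ D, #(allowed u) = r := fun u hu => by
    simp [allowed, ne_of_mem_of_not_mem hu hv, hu, card_compl]
  have hrest : ∀ u ∈ (insert v D)ᶜ, #(allowed u) = r + 1 := fun u hu => by
    simp only [mem_compl, mem_insert, not_or] at hu
    simp [allowed, hu.1, hu.2]
  rw [prod_congr rfl hD, prod_congr rfl hrest, prod_const, prod_const, card_compl,
    card_insert_of_notMem hv]
  simp [allowed]

theorem card_le_sq_mul_card_isolates {v : V} {D : Finset V} (hv : v ∉ D) (hD : #D ≤ r) :
    (r + 1) ^ Fintype.card V ≤ (r + 1) ^ 2 * #{f : V → Fin (r + 1) | Isolates f v D} := by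
  have hN : #D + 1 ≤ Fintype.card V := by
    simpa [card_insert_of_notMem hv] using card_le_univ (insert v D)
  rw [card_isolates hv]
  calc (r + 1) ^ Fintype.card V
      = (r + 1) ^ #D * (r + 1) * (r + 1) ^ (Fintype.card V - (#D + 1)) := by
        rw [← pow_succ, ← pow_add, Nat.add_sub_cancel' hN]
    _ ≤ (r + 1) * r ^ #D * (r + 1) * (r + 1) ^ (Fintype.card V - (#D + 1)) := by
        gcongr; exact succ_pow_le_succ_mul_pow hD
    _ = (r + 1) ^ 2 * (r ^ #D * (r + 1) ^ (Fintype.card V - (#D + 1))) := by ring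

theorem card_not_isolates_le {v : V} {D : Finset V} (hv : v ∉ D) (hD : #D ≤ r) :
    (#{f : V → Fin (r + 1) | ¬ Isolates f v D} : ℝ) ≤
      (1 - 1 / ((r : ℝ) + 1) ^ 2) * Fintype.card (V → Fin (r + 1)) := by
  have hsplit : (#{f : V → Fin (r + 1) | Isolates f v D} : ℝ) +
      #{f : V → Fin (r + 1) | ¬ Isolates f v D} = ((r : ℝ) + 1) ^ Fintype.card V := by
    have := card_filter_add_card_filter_not (s := univ)
      (fun f : V → Fin (r + 1) => Isolates f v D)
    rw [card_univ, Fintype.card_fun, Fintype.card_fin] at this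
    exact_mod_cast this
  have hiso : ((r : ℝ) + 1) ^ Fintype.card V / (r + 1) ^ 2 ≤
      #{f : V → Fin (r + 1) | Isolates f v D} := by
    rw [div_le_iff₀ (by positivity), mul_comm]
    exact_mod_cast card_le_sq_mul_card_isolates hv hD
  rw [Fintype.card_fun, Fintype.card_fin, sub_mul, one_mul, div_mul_eq_mul_div, one_mul]
  push_cast
  linarith

theorem card_isolation_pairs_le (hV : 2 ≤ Fintype.card V) (r : ℕ) :
    #{p : V × Finset V | p.1 ∉ p.2 ∧ #p.2 ≤ r} ≤ Fintype.card V ^ (r + 2) := calc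
  #{p : V × Finset V | p.1 ∉ p.2 ∧ #p.2 ≤ r}
      ≤ #((univ : Finset V) ×ˢ ({D | #D ≤ r} : Finset (Finset V))) :=
    card_le_card fun p hp => by simp_all
  _ ≤ Fintype.card V * Fintype.card V ^ (r + 1) := by
    rw [card_product, card_univ]
    exact Nat.mul_le_mul_left _ ((card_filter_card_le_le_sum_pow V r).trans
      (Nat.geomSum_lt hV fun i hi => mem_range.1 hi).le)
  _ = Fintype.card V ^ (r + 2) := by ring

theorem exists_isolating_family (hV : 2 ≤ Fintype.card V) (r m : ℕ)
    (h : (Fintype.card V : ℝ) ^ (r + 2) * (1 - 1 / ((r : ℝ) + 1) ^ 2) ^ m < 1) :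
    ∃ fs : Fin m → V → Fin (r + 1),
      ∀ v D, v ∉ D → #D ≤ r → ∃ i, Isolates (fs i) v D := by
  set P : Finset (V × Finset V) := {p | p.1 ∉ p.2 ∧ #p.2 ≤ r}
  have hq : (0 : ℝ) ≤ 1 - 1 / ((r : ℝ) + 1) ^ 2 := by
    rw [sub_nonneg, div_le_one (by positivity)]
    nlinarith [(r.cast_nonneg : (0 : ℝ) ≤ r)]
  have hP : (#P : ℝ) * (1 - 1 / ((r : ℝ) + 1) ^ 2) ^ m < 1 := by
    refine lt_of_le_of_lt ?_ h
    gcongr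
    exact_mod_cast card_isolation_pairs_le hV r
  obtain ⟨fs, hfs⟩ := exists_forall_exists_notMem P
    (fun p => {f : V → Fin (r + 1) | ¬ Isolates f p.1 p.2}) m
    (fun p hp => card_not_isolates_le (mem_filter.1 hp).2.1 (mem_filter.1 hp).2.2) hP
  refine ⟨fs, fun v D hv hD => ?_⟩
  obtain ⟨i, hi⟩ := hfs (v, D) (by simp [P, hv, hD])
  exact ⟨i, by simpa using hi⟩

end Isolation
theorem four_mul_sq_mul_lt_pow (k : ℕ) : 4 * k ^ 2 * (2 * k + 1) < (k + 2) ^ (k + 2) := by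
  match k with
  | 0 => norm_num
  | 1 => norm_num
  | k + 2 =>
    calc 4 * (k + 2) ^ 2 * (2 * (k + 2) + 1) < (k + 2 + 2) ^ 4 := by ring_nf; nlinarith
      _ ≤ (k + 2 + 2) ^ (k + 2 + 2) := Nat.pow_le_pow_right (by omega) (by omega)

theorem pow_mul_one_sub_pow_lt_one {k n m : ℕ} (hk : 1 ≤ k) (hn : 2 ≤ n)
    (hm : ((k : ℝ) + 2) ^ (k + 2) * Real.log n ≤ m) :
    (n : ℝ) ^ (2 * k + 1) * (1 - 1 / (2 * k : ℝ) ^ 2) ^ m < 1 := by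
  set x := 1 / (2 * k : ℝ) ^ 2 with hx
  have hlog : 0 < Real.log n := Real.log_pos (by exact_mod_cast hn)
  have hpoly : (4 * k ^ 2 * (2 * k + 1) : ℝ) < (k + 2) ^ (k + 2) := by
    exact_mod_cast four_mul_sq_mul_lt_pow k
  have hk' : (1 : ℝ) ≤ k := by exact_mod_cast hk
  have hx1 : x ≤ 1 := by rw [hx, div_le_one (by positivity)]; nlinarith
  have hxk : x * (4 * k ^ 2) = 1 := by rw [hx]; field_simp; ring
  have hgap : (2 * k + 1) * Real.log n < x * m := calc
    (2 * k + 1) * Real.log n = x * (4 * k ^ 2 * (2 * k + 1) * Real.log n) := by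
      rw [← mul_assoc, ← mul_assoc, hxk, one_mul]
    _ < x * (((k : ℝ) + 2) ^ (k + 2) * Real.log n) := by gcongr
    _ ≤ x * m := by gcongr
  have hn_exp : (n : ℝ) ^ (2 * k + 1) = Real.exp ((2 * k + 1) * Real.log n) := by
    rw [← Real.exp_log (by positivity : (0 : ℝ) < n ^ (2 * k + 1)), Real.log_pow]
    push_cast; rfl
  calc (n : ℝ) ^ (2 * k + 1) * (1 - x) ^ m
      ≤ Real.exp ((2 * k + 1) * Real.log n) * Real.exp (-x) ^ m := by
        rw [hn_exp]
        exact mul_le_mul_of_nonneg_left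
          (pow_le_pow_left₀ (by linarith) (Real.one_sub_le_exp_neg x) m) (Real.exp_pos _).le
    _ = Real.exp ((2 * k + 1) * Real.log n - x * m) := by
        rw [← Real.exp_nat_mul, ← Real.exp_add]; ring_nf
    _ < 1 := Real.exp_lt_one_iff.2 (by linarith)

/-- For `k < n` and a ground set `V` with `|V| = n`, every `m ≥ (k+2)^(k+2) · ln n`
admits a MAS function `F : P_{≤k}(V) → ℝ^m`. -/
theorem stmt2 (k n : ℕ) (hkn : k < n) (V : Type*) [Fintype V]
    (hV : Fintype.card V = n) (m : ℕ)
    (hm : ((k : ℝ) + 2) ^ (k + 2) * Real.log n ≤ m) :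
    ∃ F : {S : Multiset V // Multiset.card S ≤ k} → Fin m → ℝ,
      (∀ S T, S.val ≤ T.val → F S ≤ F T) ∧
      (∀ S T, F S ≤ F T → S.val ≤ T.val) := by
  classical
  rcases Nat.eq_zero_or_pos k with rfl | hk
  · refine ⟨0, fun _ _ _ => le_rfl, fun S T _ => ?_⟩
    rw [Multiset.card_eq_zero.1 (Nat.le_zero.1 S.2)]
    exact Multiset.zero_le _
  obtain ⟨r, hr⟩ : ∃ r, 2 * k = r + 1 := ⟨2 * k - 1, by omega⟩
  have hbound := pow_mul_one_sub_pow_lt_one hk (by omega : 2 ≤ n) hm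
  rw [← hV, show 2 * k + 1 = r + 2 by omega, show 2 * (k : ℝ) = r + 1 by exact_mod_cast hr]
    at hbound
  obtain ⟨fs, hfs⟩ := exists_isolating_family (by omega) r m hbound
  refine ⟨fun S i => Multiset.card (S.val.filter (fs i · = 0)),
    fun S T hST i => Nat.cast_le.2 (Multiset.card_le_card (Multiset.filter_le_filter _ hST)),
    fun S T hST => le_of_forall_card_filter_le hfs ?_ fun i => Nat.cast_le.1 (hST i)⟩
  have := S.2; have := T.2; omega
end

section
/- Let k ≥ 2 and n be natural numbers and let V be a ground set with |V| = n. If there exists a MAS function F from the multisets over V of cardinality at most k to ℝ^m, then m ≥ log₂(log₃ n); equivalently, n ≤ 3^{2^m}. -/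
/-!
Order `V` as `v₀, …, v_{n-1}` and let `zᵢ = F {vᵢ}`. For `i < j` the point `F {vᵢ, vⱼ}` lies above
`zᵢ` and `zⱼ` but, since `F` is separating, above no other `z_k`. Call a sequence in `α^m` with this
property for all intermediate `k` interval separated. By Erdős–Szekeres, an interval separated
sequence of length `n > s²` has a subsequence of length `s + 1` whose last coordinate is monotone;
along it the last coordinate of an intermediate point never exceeds that of both ends, so dropping
the last coordinate keeps it interval separated. Hence the maximal length `N m` satisfies
`N (m + 1) ≤ N m ^ 2` and `N 0 ≤ 2`, so `n ≤ 2 ^ 2 ^ m ≤ 3 ^ 2 ^ m`.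
-/

open Finset

section ErdosSzekeres

variable {α : Type*} [LinearOrder α] {n : ℕ}

theorem exists_strictAntiOn_of_monotoneOn_card_le {r s : ℕ} (f : Fin n → α)
    (hmono : ∀ t : Finset (Fin n), MonotoneOn f t → #t ≤ r) (hn : r * s < n) :
    ∃ u : Finset (Fin n), s < #u ∧ StrictAntiOn f u := by
  classical
  let chains (i : Fin n) : Finset (Finset (Fin n)) :=
    {t | MonotoneOn f t ∧ IsGreatest (t : Set (Fin n)) i}
  have singleton_mem (i : Fin n) : {i} ∈ chains i := by simp [chains]
  -- Labels `L i` are strictly increasing along nondecreasing pairs, so a label class is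
  -- strictly decreasing; pigeonhole over the `r` possible labels gives one of size `> s`.
  let L (i : Fin n) : ℕ := (chains i).sup card
  have exists_longest (i : Fin n) : ∃ t ∈ chains i, #t = L i :=
    (exists_mem_eq_sup _ ⟨_, singleton_mem i⟩ card).imp fun t ⟨ht, hL⟩ => ⟨ht, hL.symm⟩
  have hL_mem (i : Fin n) : L i ∈ Icc 1 r := by
    obtain ⟨t, ht, hLt⟩ := exists_longest i
    exact mem_Icc.2 ⟨le_sup (f := card) (singleton_mem i), hLt ▸ hmono t (mem_filter.1 ht).2.1⟩
  have hL_lt (i j : Fin n) (hij : i < j) (hf : f i ≤ f j) : L i < L j := by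
    obtain ⟨t, ht, hLt⟩ := exists_longest i
    obtain ⟨ht_mono, hi_mem, hi_ub⟩ := (mem_filter.1 ht).2
    have hj : j ∉ t := fun hj => (hi_ub hj).not_gt hij
    have hext : insert j t ∈ chains j := by
      refine mem_filter.2 ⟨mem_univ _, ?_, ?_⟩
      · rw [coe_insert, Set.monotoneOn_insert_iff]
        exact ⟨fun b hb _ => (ht_mono hb hi_mem (hi_ub hb)).trans hf,
          fun b hb hjb => absurd ((hi_ub hb).trans_lt hij) hjb.not_gt, ht_mono⟩
      · rw [coe_insert]
        refine ⟨Set.mem_insert _ _, fun b hb => ?_⟩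
        rcases hb with rfl | hb
        exacts [le_rfl, (hi_ub hb).trans hij.le]
    calc L i < #(insert j t) := by rw [card_insert_of_notMem hj, hLt]; omega
      _ ≤ L j := le_sup (f := card) hext
  obtain ⟨l, -, hl⟩ := exists_lt_card_fiber_of_mul_lt_card_of_maps_to (s := univ)
    (fun i _ => hL_mem i) (by simpa using hn)
  refine ⟨_, hl, fun i hi j hj hij => lt_of_not_ge fun hf => (hL_lt i j hij hf).ne ?_⟩
  rw [(mem_filter.1 hi).2, (mem_filter.1 hj).2]

theorem exists_orderEmbedding_monotone_or_antitone {s : ℕ} (f : Fin n → α) (hn : s * s < n) :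
    ∃ g : Fin (s + 1) ↪o Fin n, Monotone (f ∘ g) ∨ Antitone (f ∘ g) := by
  suffices ∃ t : Finset (Fin n), s < #t ∧ (MonotoneOn f t ∨ AntitoneOn f t) by
    obtain ⟨t, hst, ht⟩ := this
    let g := t.orderEmbOfCardLe hst
    have hg (a : Fin (s + 1)) : g a ∈ (t : Set (Fin n)) := t.orderEmbOfCardLe_mem hst a
    exact ⟨g, ht.imp (fun h a b hab => h (hg a) (hg b) (g.monotone hab))
      (fun h a b hab => h (hg a) (hg b) (g.monotone hab))⟩
  by_cases hmono : ∃ t : Finset (Fin n), s < #t ∧ MonotoneOn f t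
  · obtain ⟨t, hst, ht⟩ := hmono
    exact ⟨t, hst, .inl ht⟩
  · push Not at hmono
    obtain ⟨u, hsu, hu⟩ := exists_strictAntiOn_of_monotoneOn_card_le f
      (fun t ht => not_lt.1 fun hst => hmono t hst ht) hn
    exact ⟨u, hsu, .inr hu.antitoneOn⟩

end ErdosSzekeres

section IntervalSeparated

variable {α : Type*}

def IntervalSeparated [Preorder α] {n m : ℕ} (z : Fin n → Fin m → α) : Prop :=
  ∀ i j, i < j → ∃ q, z i ≤ q ∧ z j ≤ q ∧ ∀ k, i < k → k < j → ¬ z k ≤ q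

theorem intervalSeparated_of_monotone_of_separating [Preorder α] {V : Type*} {k n m : ℕ}
    (hk : 2 ≤ k)
    (F : {S : Multiset V // Multiset.card S ≤ k} → Fin m → α)
    (hmono : ∀ S T, S.val ≤ T.val → F S ≤ F T) (hsep : ∀ S T, F S ≤ F T → S.val ≤ T.val)
    (e : Fin n ↪ V) :
    IntervalSeparated fun i => F ⟨{e i}, by simp; omega⟩ := by
  intro i j hij
  refine ⟨F ⟨{e i, e j}, by simp; omega⟩, hmono _ _ (by simp), hmono _ _ (by simp),
    fun l hil hlj hl => ?_⟩
  have hmem : e l ∈ ({e i, e j} : Multiset V) := Multiset.singleton_le.1 (hsep _ _ hl)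
  rcases Multiset.mem_cons.1 hmem with h | h
  · exact hil.ne' (e.injective h)
  · exact hlj.ne (e.injective (Multiset.mem_singleton.1 h))

variable [LinearOrder α]

theorem IntervalSeparated.init_comp {n m p : ℕ} {z : Fin n → Fin (m + 1) → α}
    (hz : IntervalSeparated z) (g : Fin p ↪o Fin n)
    (hg : ∀ a c b, a < c → c < b →
      z (g c) (Fin.last m) ≤ max (z (g a) (Fin.last m)) (z (g b) (Fin.last m))) :
    IntervalSeparated fun a => Fin.init (z (g a)) := by
  intro a b hab
  obtain ⟨q, hqa, hqb, hq⟩ := hz (g a) (g b) (g.strictMono hab)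
  refine ⟨Fin.init q, fun t => hqa _, fun t => hqb _, fun c hac hcb hc => ?_⟩
  refine hq (g c) (g.strictMono hac) (g.strictMono hcb) (Fin.forall_fin_succ'.2 ⟨hc, ?_⟩)
  exact (hg a c b hac hcb).trans (max_le (hqa _) (hqb _))

theorem IntervalSeparated.card_le {m : ℕ} :
    ∀ {n : ℕ} {z : Fin n → Fin m → α}, IntervalSeparated z → n ≤ 2 ^ 2 ^ m := by
  induction m with
  | zero =>
    intro n z hz
    by_contra! h
    obtain ⟨q, -, -, hq⟩ := hz ⟨0, by omega⟩ ⟨2, by omega⟩ (by simp [Fin.lt_def])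
    exact hq ⟨1, by omega⟩ (by simp [Fin.lt_def]) (by simp [Fin.lt_def]) fun t => t.elim0
  | succ m ih =>
    intro n z hz
    by_contra! h
    have hn : 2 ^ 2 ^ m * 2 ^ 2 ^ m < n := by rwa [← pow_add, ← two_mul, ← pow_succ']
    obtain ⟨g, hg⟩ := exists_orderEmbedding_monotone_or_antitone (fun i => z i (Fin.last m)) hn
    have hpeak (a c b : Fin (2 ^ 2 ^ m + 1)) (hac : a < c) (hcb : c < b) :
        z (g c) (Fin.last m) ≤ max (z (g a) (Fin.last m)) (z (g b) (Fin.last m)) := by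
      rcases hg with hg | hg
      · exact (hg hcb.le).trans (le_max_right _ _)
      · exact (hg hac.le).trans (le_max_left _ _)
    have := ih (hz.init_comp g hpeak)
    omega

end IntervalSeparated

/-- For `k ≥ 2` and a ground set `V` with `|V| = n`, if a MAS function
`F : P_{≤k}(V) → ℝ^m` exists, then `m ≥ log₂ log₃ n`, i.e. `n ≤ 3^(2^m)`. -/
theorem stmt3 (k n : ℕ) (hk : 2 ≤ k) (V : Type*) [Fintype V]
    (hV : Fintype.card V = n) (m : ℕ)
    (hF : ∃ F : {S : Multiset V // Multiset.card S ≤ k} → Fin m → ℝ,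
      (∀ S T, S.val ≤ T.val → F S ≤ F T) ∧
      (∀ S T, F S ≤ F T → S.val ≤ T.val)) :
    n ≤ 3 ^ 2 ^ m := by
  obtain ⟨F, hmono, hsep⟩ := hF
  let e : Fin n ↪ V := (Fintype.equivFinOfCardEq hV).symm.toEmbedding
  calc n ≤ 2 ^ 2 ^ m := (intervalSeparated_of_monotone_of_separating hk F hmono hsep e).card_le
    _ ≤ 3 ^ 2 ^ m := Nat.pow_le_pow_left (by norm_num) _
end

section
/- Let k ≥ 2 and n be natural numbers with k ≤ (n−1)/2, and let V be a ground set with |V| = n. If there exists a MAS function F from the multisets over V of cardinality at most k to ℝ^m, then m ≥ 2k. -/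
/-- For `2 ≤ k ≤ (n−1)/2` and a ground set `V` with `|V| = n`, if a MAS function
`F : P_{≤k}(V) → ℝ^m` exists, then `m ≥ 2k`. -/
theorem stmt4 (k n : ℕ) (hk : 2 ≤ k) (hk2 : 2 * k ≤ n - 1)
    (V : Type*) [Fintype V] (hV : Fintype.card V = n) (m : ℕ)
    (hF : ∃ F : {S : Multiset V // Multiset.card S ≤ k} → Fin m → ℝ,
      (∀ S T, S.val ≤ T.val → F S ≤ F T) ∧
      (∀ S T, F S ≤ F T → S.val ≤ T.val)) :
    2 * k ≤ m := by
  classical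
  by_contra hm
  push_neg at hm
  obtain ⟨F, hmono, hsep⟩ := hF
  have hn : 2 * k + 1 ≤ n := by omega
  have hcardV : 2 * k + 1 ≤ Fintype.card V := by omega
  have hsingle : ∀ x : V, Multiset.card ({x} : Multiset V) ≤ k := by
    intro x
    rw [Multiset.card_singleton]; omega
  set φ : V → Fin m → ℝ := fun x c => F ⟨{x}, hsingle x⟩ c with hφ
  -- main auxiliary argument
  have aux : ∀ u v : V, u ≠ v →
      (∀ c : Fin m, ∃ w : V, w ≠ u ∧ φ u c ≤ φ w c) →
      (Finset.univ.filter (fun c : Fin m => φ v c < φ u c)).card ≤ k - 1 →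
      False := by
    intro u v huv hu hJ
    set J := Finset.univ.filter (fun c : Fin m => φ v c < φ u c) with hJdef
    choose y hy1 hy2 using hu
    set B : Multiset V := v ::ₘ (J.val.map y) with hB
    have hBcard : Multiset.card B ≤ k := by
      have hcb : Multiset.card B = J.card + 1 := by
        rw [hB, Multiset.card_cons, Multiset.card_map]
        rfl
      omega
    have huB : u ∉ B := by
      simp only [hB, Multiset.mem_cons, Multiset.mem_map, not_or]
      constructor
      · exact fun h => huv h
      · rintro ⟨c, _, hc⟩
        exact hy1 c hc
    have hnotle : ¬ (({u} : Multiset V) ≤ B) := by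
      rw [Multiset.singleton_le]
      exact huB
    have hex : ∃ c, F ⟨B, hBcard⟩ c < F ⟨{u}, hsingle u⟩ c := by
      by_contra hcon
      push_neg at hcon
      exact hnotle (hsep ⟨{u}, hsingle u⟩ ⟨B, hBcard⟩ (fun c => hcon c))
    obtain ⟨c₀, hc₀⟩ := hex
    by_cases hcJ : c₀ ∈ J
    · have hyB : y c₀ ∈ B := by
        simp only [hB, Multiset.mem_cons, Multiset.mem_map]
        right
        exact ⟨c₀, by simpa using hcJ, rfl⟩
      have h1 : F ⟨{y c₀}, hsingle (y c₀)⟩ ≤ F ⟨B, hBcard⟩ :=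
        hmono _ _ (by rw [Multiset.singleton_le]; exact hyB)
      have h1' := h1 c₀
      have h2 := hy2 c₀
      simp only [hφ] at h2
      exact absurd (lt_of_le_of_lt h1' hc₀) (not_lt.mpr h2)
    · have hvB : v ∈ B := by simp [hB]
      have h1 : F ⟨{v}, hsingle v⟩ ≤ F ⟨B, hBcard⟩ :=
        hmono _ _ (by rw [Multiset.singleton_le]; exact hvB)
      have h1' := h1 c₀
      have h2 : ¬ (φ v c₀ < φ u c₀) := by
        intro h
        exact hcJ (by simp [hJdef, h])
      push_neg at h2
      simp only [hφ] at h2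
      exact absurd (lt_of_le_of_lt h1' hc₀) (not_lt.mpr h2)
  -- m = 0 case
  rcases Nat.eq_zero_or_pos m with hm0 | hm0
  · subst hm0
    obtain ⟨u, v, huv⟩ := Fintype.exists_pair_of_one_lt_card (α := V) (by omega)
    have hle : F ⟨{u}, hsingle u⟩ ≤ F ⟨{v}, hsingle v⟩ := fun c => c.elim0
    have h2 : ({u} : Multiset V) ≤ ({v} : Multiset V) := hsep _ _ hle
    rw [Multiset.singleton_le, Multiset.mem_singleton] at h2
    exact huv h2
  -- main case
  set S : Finset V :=
    Finset.univ.filter (fun x : V => ∀ c : Fin m, ∃ w : V, w ≠ x ∧ φ x c ≤ φ w c) with hS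
  have hwit : ∀ x ∈ Finset.univ \ S, ∃ c : Fin m, ∀ w : V, w ≠ x → φ w c < φ x c := by
    intro x hx
    have hxS := (Finset.mem_sdiff.mp hx).2
    rw [hS, Finset.mem_filter] at hxS
    push_neg at hxS
    obtain ⟨c, hc⟩ := hxS (Finset.mem_univ x)
    exact ⟨c, fun w hw => hc w hw⟩
  choose g hg using hwit
  have hTop : (Finset.univ \ S).card ≤ m := by
    by_contra hcon
    push_neg at hcon
    set f : V → Fin m := fun x =>
      if h : x ∈ Finset.univ \ S then g x h else ⟨0, hm0⟩ with hf
    have hcard' : (Finset.univ : Finset (Fin m)).card < (Finset.univ \ S).card := by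
      simpa using hcon
    obtain ⟨a, ha, b, hb, hab, hfe⟩ :=
      Finset.exists_ne_map_eq_of_card_lt_of_maps_to hcard'
        (fun x (_ : x ∈ Finset.univ \ S) => Finset.mem_univ (f x))
    have hfa : f a = g a ha := by simp only [hf]; exact dif_pos ha
    have hfb : f b = g b hb := by simp only [hf]; exact dif_pos hb
    have h1 := hg a ha b hab.symm
    have h2 := hg b hb a hab
    rw [← hfa] at h1
    rw [← hfb, ← hfe] at h2
    linarith
  have hScard : 1 < S.card := by
    have h1 : (Finset.univ \ S).card = Fintype.card V - S.card := by
      rw [Finset.card_sdiff_of_subset (Finset.subset_univ S), Finset.card_univ]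
    have h2 : S.card ≤ Fintype.card V := by
      simpa [Finset.card_univ] using Finset.card_le_card (Finset.subset_univ S)
    omega
  obtain ⟨u, hu, v, hv, huv⟩ := Finset.one_lt_card.mp hScard
  rw [hS, Finset.mem_filter] at hu hv
  set J1 := Finset.univ.filter (fun c : Fin m => φ v c < φ u c) with hJ1
  set J2 := Finset.univ.filter (fun c : Fin m => φ u c < φ v c) with hJ2
  have hdisj : Disjoint J1 J2 := by
    rw [Finset.disjoint_left]
    intro c h1 h2
    rw [hJ1, Finset.mem_filter] at h1
    rw [hJ2, Finset.mem_filter] at h2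
    linarith [h1.2, h2.2]
  have hsum : J1.card + J2.card ≤ m := by
    have h := Finset.card_le_card (Finset.subset_univ (J1 ∪ J2))
    rw [Finset.card_union_of_disjoint hdisj] at h
    simpa using h
  rcases (by omega : J1.card ≤ k - 1 ∨ J2.card ≤ k - 1) with h | h
  · exact aux u v huv hu.2 h
  · exact aux v u huv.symm hv.2 h
end

section
/- Let ℓ, k, n be natural numbers with 1 ≤ ℓ ≤ k and let V be a ground set with |V| = n. If there exists a MAS function F from the multisets over V of cardinality at most k to ℝ^m, then m ≥ min(n − ℓ, ℓk + 2ℓ − ℓ²). -/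
/-!
Let `f i v` be the `i`-th coordinate of `F {v}`. Since `F` is separating and monotone, a point
`x` outside a multiset `S` of size at most `k` must strictly beat every element of `S` in some
coordinate. Call `x` a top if it is the strict maximum of `V` in some coordinate; each coordinate
has at most one top, so unless `n - ℓ ≤ m` there are `ℓ` non-tops `Y`. For `x ∈ Y`, let `U x` be
the coordinates in which `x` strictly beats the rest of `Y`; these sets are pairwise disjoint.
If `|U x| ≤ k - ℓ + 1`, then `S = (Y \ {x}) ∪ {one point at least as large as x in coordinate i
| i ∈ U x}` has size at most `k`, and no coordinate lets `x` strictly beat all of `S`.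
Hence `|U x| ≥ k - ℓ + 2` and `m ≥ ℓ (k - ℓ + 2)`.
-/

open Finset

section

variable {V ι β : Type*} [LinearOrder β]

def strictMaxCoords [Fintype ι] [DecidableEq V] (f : ι → V → β) (Y : Finset V) (x : V) :
    Finset ι :=
  {i | ∀ y ∈ Y, y ≠ x → f i y < f i x}

def SeparatesUpTo (f : ι → V → β) (k : ℕ) : Prop :=
  ∀ S : Finset V, #S ≤ k → ∀ x ∉ S, ∃ i, ∀ y ∈ S, f i y < f i x

section StrictMaxCoords

variable [Fintype ι] [DecidableEq V]

theorem disjoint_strictMaxCoords (f : ι → V → β) {Y : Finset V} {x x' : V} (hx : x ∈ Y)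
    (hx' : x' ∈ Y) (hne : x ≠ x') :
    Disjoint (strictMaxCoords f Y x) (strictMaxCoords f Y x') := by
  simp only [strictMaxCoords, disjoint_left, mem_filter, mem_univ, true_and]
  intro i hi hi'
  exact lt_asymm (hi x' hx' hne.symm) (hi' x hx hne)

theorem sum_card_strictMaxCoords_le (f : ι → V → β) (Y : Finset V) :
    ∑ x ∈ Y, #(strictMaxCoords f Y x) ≤ Fintype.card ι := by
  classical
  rw [← card_biUnion fun x hx x' hx' hne => disjoint_strictMaxCoords f hx hx' hne]
  exact card_le_univ _

theorem card_filter_strictMaxCoords_nonempty_le [Fintype V] (f : ι → V → β) :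
    #{x | (strictMaxCoords f univ x).Nonempty} ≤ Fintype.card ι :=
  calc #{x | (strictMaxCoords f univ x).Nonempty}
      ≤ ∑ x ∈ {x | (strictMaxCoords f univ x).Nonempty}, #(strictMaxCoords f univ x) :=
        by simpa using card_nsmul_le_sum _ (fun x => #(strictMaxCoords f univ x)) 1
            fun x hx => card_pos.2 (mem_filter.1 hx).2
    _ ≤ ∑ x, #(strictMaxCoords f univ x) := sum_le_sum_of_subset (filter_subset _ _)
    _ ≤ Fintype.card ι := sum_card_strictMaxCoords_le f univ

theorem le_card_strictMaxCoords [Fintype V] {f : ι → V → β} {k : ℕ} (hf : SeparatesUpTo f k)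
    {Y : Finset V} {x : V} (hx : x ∈ Y)
    (hxtop : strictMaxCoords f univ x = ∅) :
    k + 2 - #Y ≤ #(strictMaxCoords f Y x) := by
  by_contra! hU
  have hbeaten : ∀ i, ∃ y, y ≠ x ∧ f i x ≤ f i y := by
    intro i
    have : i ∉ strictMaxCoords f univ x := by simp [hxtop]
    simpa [strictMaxCoords] using this
  choose beater hbeater_ne hbeater using hbeaten
  set S := Y.erase x ∪ (strictMaxCoords f Y x).image beater
  have hS : #S ≤ k := by
    refine (card_union_le _ _).trans ?_
    have := card_image_le (s := strictMaxCoords f Y x) (f := beater)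
    have := card_erase_of_mem hx
    have := card_pos.2 ⟨x, hx⟩
    omega
  have hxS : x ∉ S := by
    simp only [S, mem_union, mem_erase, mem_image, not_or, not_exists, not_and]
    exact ⟨fun h => (h rfl).elim, fun i _ h => hbeater_ne i h⟩
  obtain ⟨i, hi⟩ := hf S hS x hxS
  by_cases hiU : i ∈ strictMaxCoords f Y x
  · exact (hi _ (mem_union_right _ (mem_image_of_mem _ hiU))).not_ge (hbeater i)
  · simp only [strictMaxCoords, mem_filter, mem_univ, true_and, not_forall, not_lt] at hiU
    obtain ⟨y, hyY, hyx, hxy⟩ := hiU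
    exact (hi y (mem_union_left _ (mem_erase.2 ⟨hyx, hyY⟩))).not_ge hxy

end StrictMaxCoords

def singletonProfile {k : ℕ} (F : {S : Multiset V // Multiset.card S ≤ k} → ι → β)
    (hk : 1 ≤ k) (i : ι) (v : V) : β :=
  F ⟨{v}, by simpa using hk⟩ i

theorem separatesUpTo_singletonProfile {k : ℕ} (hk : 1 ≤ k)
    {F : {S : Multiset V // Multiset.card S ≤ k} → ι → β}
    (hmono : ∀ S T, S.val ≤ T.val → F S ≤ F T) (hsep : ∀ S T, F S ≤ F T → S.val ≤ T.val) :
    SeparatesUpTo (singletonProfile F hk) k := by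
  intro S hS x hx
  have hnle : ¬ F ⟨{x}, by simpa using hk⟩ ≤ F ⟨S.val, hS⟩ := fun h =>
    hx (Multiset.singleton_le.1 (hsep _ _ h))
  obtain ⟨i, hi⟩ := by simpa [Pi.le_def] using hnle
  refine ⟨i, fun y hy => lt_of_le_of_lt ?_ hi⟩
  exact hmono ⟨{y}, by simpa using hk⟩ ⟨S.val, hS⟩ (Multiset.singleton_le.2 hy) i

end

theorem stmt5_general (l k n : ℕ) (hlk : l ≤ k)
    (V : Type*) [Fintype V] (hV : Fintype.card V = n) (m : ℕ)
    (hF : ∃ F : {S : Multiset V // Multiset.card S ≤ k} → Fin m → ℝ,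
      (∀ S T, S.val ≤ T.val → F S ≤ F T) ∧
      (∀ S T, F S ≤ F T → S.val ≤ T.val)) :
    min (n - l) (l * k + 2 * l - l ^ 2) ≤ m := by
  classical
  obtain rfl | hk := Nat.eq_zero_or_pos k
  · simp [Nat.le_zero.1 hlk]
  obtain ⟨F, hmono, hsep⟩ := hF
  set f := singletonProfile F hk
  rcases le_or_gt (n - l) m with hnl | hnl
  · exact (min_le_left _ _).trans hnl
  have htops := card_filter_strictMaxCoords_nonempty_le f
  have hnontops : l ≤ #{x | strictMaxCoords f univ x = ∅} := by
    have := card_filter_add_card_filter_not (s := univ)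
      (fun x => (strictMaxCoords f univ x).Nonempty)
    simp only [not_nonempty_iff_eq_empty, card_univ, Fintype.card_fin] at this htops
    omega
  obtain ⟨Y, hYsub, rfl⟩ := exists_subset_card_eq hnontops
  have hUx : ∀ x ∈ Y, k + 2 - #Y ≤ #(strictMaxCoords f Y x) := fun x hx =>
    le_card_strictMaxCoords (separatesUpTo_singletonProfile hk hmono hsep) hx
      (mem_filter.1 (hYsub hx)).2
  calc min (n - #Y) (#Y * k + 2 * #Y - #Y ^ 2)
      ≤ #Y * (k + 2 - #Y) := min_le_of_right_le (by rw [Nat.mul_sub, mul_add, sq, mul_comm 2])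
    _ ≤ ∑ x ∈ Y, #(strictMaxCoords f Y x) := by simpa using card_nsmul_le_sum Y _ _ hUx
    _ ≤ m := by simpa using sum_card_strictMaxCoords_le f Y

/-- For `1 ≤ ℓ ≤ k` and a ground set `V` with `|V| = n`, if a MAS function
`F : P_{≤k}(V) → ℝ^m` exists, then `m ≥ min (n − ℓ) (ℓk + 2ℓ − ℓ²)`. -/
theorem stmt5 (l k n : ℕ) (hl : 1 ≤ l) (hlk : l ≤ k)
    (V : Type*) [Fintype V] (hV : Fintype.card V = n) (m : ℕ)
    (hF : ∃ F : {S : Multiset V // Multiset.card S ≤ k} → Fin m → ℝ,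
      (∀ S T, S.val ≤ T.val → F S ≤ F T) ∧
      (∀ S T, F S ≤ F T → S.val ≤ T.val)) :
    min (n - l) (l * k + 2 * l - l ^ 2) ≤ m :=
  stmt5_general l k n hlk V hV m hF
end

section
/- Let V be an infinite ground set and let k ≥ 2. Then for every finite m ∈ ℕ there does not exist a MAS function F from the multisets over V of cardinality at most k to ℝ^m. -/
/-!
Take singletons `{v₀}, {v₁}, …` of distinct elements and, by Ramsey's theorem for sequences
applied once per coordinate, pass to a subsequence along which every coordinate of `F {vₙ}` is
monotone or antitone. Since `{v₁} ⊄ {v₀, v₂}` (this is where `k ≥ 2` enters), separation gives a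
coordinate in which `F {v₁}` exceeds `F {v₀, v₂}`, hence by monotonicity exceeds both `F {v₀}`
and `F {v₂}`; no monotone or antitone sequence has such a strict peak at its middle term.
-/

open Multiset

theorem exists_strictMono_monotone_or_antitone_comp {α : Type*} [LinearOrder α] (f : ℕ → α) :
    ∃ g : ℕ → ℕ, StrictMono g ∧ (Monotone (f ∘ g) ∨ Antitone (f ∘ g)) := by
  obtain ⟨g, hle | hnle⟩ := exists_increasing_or_nonincreasing_subseq (· ≤ ·) f
  · exact ⟨g, g.strictMono, Or.inl (monotone_iff_forall_lt.2 hle)⟩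
  · exact ⟨g, g.strictMono,
      Or.inr (antitone_iff_forall_lt.2 fun m n hmn => (not_le.1 (hnle m n hmn)).le)⟩

theorem Finset.exists_strictMono_forall_monotone_or_antitone_comp {ι α : Type*} [LinearOrder α]
    (s : Finset ι) (x : ι → ℕ → α) :
    ∃ g : ℕ → ℕ, StrictMono g ∧ ∀ t ∈ s, Monotone (x t ∘ g) ∨ Antitone (x t ∘ g) := by
  classical
  induction s using Finset.induction_on with
  | empty => exact ⟨id, strictMono_id, by simp⟩
  | insert a s _ ih =>
    obtain ⟨g, hg, hs⟩ := ih
    obtain ⟨g', hg', ha⟩ := exists_strictMono_monotone_or_antitone_comp (x a ∘ g)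
    refine ⟨g ∘ g', hg.comp hg', fun t ht => ?_⟩
    rcases Finset.mem_insert.1 ht with rfl | ht
    · exact ha
    · exact (hs t ht).imp (·.comp hg'.monotone) (·.comp_monotone hg'.monotone)

section BoundedMultiset

variable {V : Type*} {k : ℕ}

def boundedSingleton (hk : 1 ≤ k) (a : V) : {S : Multiset V // card S ≤ k} :=
  ⟨{a}, by simpa using hk⟩

theorem exists_apply_singleton_lt_of_monotone_of_separating {ι α : Type*} [LinearOrder α]
    (hk : 2 ≤ k) {F : {S : Multiset V // card S ≤ k} → ι → α}
    (hmono : ∀ S T, S.val ≤ T.val → F S ≤ F T) (hsep : ∀ S T, F S ≤ F T → S.val ≤ T.val)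
    {a b c : V} (hab : a ≠ b) (hcb : c ≠ b) :
    ∃ t, F (boundedSingleton (by omega) a) t < F (boundedSingleton (by omega) b) t ∧
      F (boundedSingleton (by omega) c) t < F (boundedSingleton (by omega) b) t := by
  let T : {S : Multiset V // card S ≤ k} := ⟨{a, c}, by simpa using hk⟩
  have hb : ¬ ({b} : Multiset V) ≤ {a, c} := by
    simpa [Multiset.singleton_le] using ⟨hab.symm, hcb.symm⟩
  obtain ⟨t, ht⟩ : ∃ t, F T t < F (boundedSingleton (by omega) b) t := by
    simpa [Pi.le_def] using mt (hsep _ T) hb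
  have hle (x : V) (hx : x ∈ T.val) : F (boundedSingleton (by omega) x) t ≤ F T t :=
    hmono _ T (Multiset.singleton_le.2 hx) t
  exact ⟨t, (hle a (by simp [T])).trans_lt ht, (hle c (by simp [T])).trans_lt ht⟩

end BoundedMultiset

/-- If the ground set `V` is infinite and `k ≥ 2`, then for every finite `m` there is
no MAS function `F : P_{≤k}(V) → ℝ^m`. -/
theorem stmt6 (V : Type*) [Infinite V] (k : ℕ) (hk : 2 ≤ k) (m : ℕ) :
    ¬ ∃ F : {S : Multiset V // Multiset.card S ≤ k} → Fin m → ℝ,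
      (∀ S T, S.val ≤ T.val → F S ≤ F T) ∧
      (∀ S T, F S ≤ F T → S.val ≤ T.val) := by
  rintro ⟨F, hmono, hsep⟩
  let v := Infinite.natEmbedding V
  obtain ⟨g, hg, hmon⟩ := Finset.univ.exists_strictMono_forall_monotone_or_antitone_comp
    fun t n => F (boundedSingleton (by omega) (v n)) t
  have hv : ∀ {i j}, i ≠ j → v (g i) ≠ v (g j) := fun hij => by
    simpa [v.injective.eq_iff, hg.injective.eq_iff] using hij
  obtain ⟨t, h0, h2⟩ := exists_apply_singleton_lt_of_monotone_of_separating hk hmono hsep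
    (hv (by decide : 0 ≠ 1)) (hv (by decide : 2 ≠ 1))
  rcases hmon t (Finset.mem_univ t) with h | h
  · exact (h (by decide : 1 ≤ 2)).not_gt h2
  · exact (h (by decide : 0 ≤ 1)).not_gt h0
end

section
/- Let V = [−1,1] ⊂ ℝ and define F on multisets over V of cardinality at most 1 by F(∅) = (−1, −1) and F({x}) = (−x, x). Then F is a MAS function: for all multisets S, T over V of cardinality at most 1, S ⊆ T if and only if F(S) ≤ F(T) coordinatewise. -/
/-- Let `V = [−1,1] ⊂ ℝ`. Any `F` on multisets over `V` of cardinality at most 1 with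
`F(∅) = (−1,−1)` and `F({x}) = (−x, x)` is a MAS function:
`S ⊆ T ↔ F(S) ≤ F(T)` coordinatewise. -/
theorem stmt7
    (F : {S : Multiset (Set.Icc (-1 : ℝ) 1) // Multiset.card S ≤ 1} → ℝ × ℝ)
    (hF0 : ∀ S, S.val = 0 → F S = (-1, -1))
    (hF1 : ∀ S (x : Set.Icc (-1 : ℝ) 1), S.val = {x} → F S = (-(x : ℝ), (x : ℝ)))
    (S T : {S : Multiset (Set.Icc (-1 : ℝ) 1) // Multiset.card S ≤ 1}) :
    S.val ≤ T.val ↔ F S ≤ F T := by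
  have hS : S.val = 0 ∨ ∃ x, S.val = {x} := by
    rcases Nat.le_one_iff_eq_zero_or_eq_one.mp S.2 with h | h
    · exact Or.inl (Multiset.card_eq_zero.mp h)
    · exact Or.inr (Multiset.card_eq_one.mp h)
  have hT : T.val = 0 ∨ ∃ x, T.val = {x} := by
    rcases Nat.le_one_iff_eq_zero_or_eq_one.mp T.2 with h | h
    · exact Or.inl (Multiset.card_eq_zero.mp h)
    · exact Or.inr (Multiset.card_eq_one.mp h)
  rcases hS with hS0 | ⟨x, hSx⟩ <;> rcases hT with hT0 | ⟨y, hTy⟩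
  · rw [hF0 S hS0, hF0 T hT0, hS0, hT0]
    simp
  · rw [hF0 S hS0, hF1 T y hTy, hS0]
    simp only [Multiset.zero_le, true_iff, Prod.mk_le_mk]
    obtain ⟨y, hy1, hy2⟩ := y
    constructor <;> simp_all <;> linarith
  · rw [hF1 S x hSx, hF0 T hT0, hSx, hT0]
    simp only [Prod.mk_le_mk]
    obtain ⟨x, hx1, hx2⟩ := x
    constructor
    · intro h
      simpa using Multiset.card_le_card h
    · rintro ⟨h1, h2⟩
      simp only at h1 h2
      linarith
  · rw [hF1 S x hSx, hF1 T y hTy, hSx, hTy]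
    simp only [Prod.mk_le_mk, Multiset.singleton_le, Multiset.mem_singleton]
    constructor
    · rintro rfl; simp
    · rintro ⟨h1, h2⟩
      have : (x : ℝ) = y := le_antisymm h2 (by linarith)
      exact Subtype.ext this
end

section
/- Let σ : ℝ → ℝ be a hat activation and M₂ : ℝ → ℝ a strictly monotone increasing function. Then the parametric set function F(S; (a, b)) = M₂(Σ_{x∈S} σ(aᵀx + b)) on finite multisets over ℝ^d is weakly MAS: (i) for every parameter choice (a, b) ∈ ℝ^d × ℝ, S ⊆ T implies F(S; (a,b)) ≤ F(T; (a,b)); and (ii) whenever S ⊄ T, there exists (a, b) ∈ ℝ^d × ℝ with F(S; (a,b)) > F(T; (a,b)). -/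
open scoped Matrix

/-- The parametric set function `F(S; (a,b)) = M₂(∑_{x∈S} σ(aᵀx + b))`. -/
noncomputable def hatDeepSetsF {d : ℕ} (σ : ℝ → ℝ) (M2 : ℝ → ℝ)
    (a : Fin d → ℝ) (b : ℝ) (S : Multiset (Fin d → ℝ)) : ℝ :=
  M2 ((S.map (fun x => σ (a ⬝ᵥ x + b))).sum)

/-- Sum monotonicity for nonneg maps. -/
lemma map_sum_mono {α : Type*} (f : α → ℝ) (hf : ∀ x, 0 ≤ f x)
    {S T : Multiset α} (h : S ≤ T) : (S.map f).sum ≤ (T.map f).sum := by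
  obtain ⟨U, rfl⟩ := Multiset.le_iff_exists_add.mp h
  rw [Multiset.map_add, Multiset.sum_add]
  have : 0 ≤ (U.map f).sum := Multiset.sum_nonneg (by
    intro x hx; obtain ⟨y, _, rfl⟩ := Multiset.mem_map.mp hx; exact hf y)
  linarith

/-- Generic direction avoiding finitely many hyperplanes. -/
lemma exists_generic {d : ℕ} (V : Finset (Fin d → ℝ)) (hV : ∀ v ∈ V, v ≠ 0) :
    ∃ a : Fin d → ℝ, ∀ v ∈ V, a ⬝ᵥ v ≠ 0 := by
  classical
  induction V using Finset.induction_on with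
  | empty => exact ⟨0, by simp⟩
  | @insert v V hvV ih =>
    obtain ⟨a, ha⟩ := ih (fun u hu => hV u (Finset.mem_insert_of_mem hu))
    have hv : v ≠ 0 := hV v (Finset.mem_insert_self v V)
    have hvv : (0:ℝ) < v ⬝ᵥ v := by
      have hnn : (0:ℝ) ≤ v ⬝ᵥ v :=
        Finset.sum_nonneg fun i _ => mul_self_nonneg (v i)
      rcases lt_or_eq_of_le hnn with h | h
      · exact h
      · exact absurd (dotProduct_self_eq_zero.mp h.symm) hv
    set B : Finset ℝ := (insert v V).image (fun u => -(a ⬝ᵥ u)/(v ⬝ᵥ u)) with hB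
    obtain ⟨c, hc⟩ := Infinite.exists_notMem_finset B
    refine ⟨a + c • v, ?_⟩
    intro u hu
    have hexp : (a + c • v) ⬝ᵥ u = a ⬝ᵥ u + c * (v ⬝ᵥ u) := by
      rw [add_dotProduct, smul_dotProduct, smul_eq_mul]
    intro h0
    rw [hexp] at h0
    have hvu : v ⬝ᵥ u ≠ 0 := by
      intro hz
      rw [hz, mul_zero, add_zero] at h0
      rcases Finset.mem_insert.mp hu with rfl | hu'
      · exact hvv.ne' (hz ▸ rfl)
      · exact ha u hu' h0
    have : c = -(a ⬝ᵥ u)/(v ⬝ᵥ u) := by field_simp; linarith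
    exact hc (this ▸ Finset.mem_image_of_mem _ hu)

/-- If `σ` is a hat activation (nonnegative, compactly supported, not identically zero,
continuous) and `M₂ : ℝ → ℝ` is strictly monotone increasing, then
`F(S;(a,b)) = M₂(∑_{x∈S} σ(aᵀx+b))` is weakly MAS: it is pointwise monotone, and for any
`S ⊄ T` there is a parameter `(a,b)` with `F(S;(a,b)) > F(T;(a,b))`. -/

theorem stmt10 {d : ℕ} (σ : ℝ → ℝ)
    (hσ0 : ∀ t, 0 ≤ σ t) (hσsupp : HasCompactSupport σ) (hσne : σ ≠ 0)
    (hσcont : Continuous σ) (M2 : ℝ → ℝ) (hM2 : StrictMono M2) :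
    (∀ (a : Fin d → ℝ) (b : ℝ) (S T : Multiset (Fin d → ℝ)),
      S ≤ T → hatDeepSetsF σ M2 a b S ≤ hatDeepSetsF σ M2 a b T) ∧
    (∀ S T : Multiset (Fin d → ℝ), ¬ S ≤ T →
      ∃ (a : Fin d → ℝ) (b : ℝ),
        hatDeepSetsF σ M2 a b T < hatDeepSetsF σ M2 a b S) := by
  classical
  constructor
  · intro a b S T h
    exact hM2.monotone (map_sum_mono _ (fun x => hσ0 _) h)
  · intro S T hST
    -- witness point with strictly larger multiplicity in S
    rw [Multiset.le_iff_count] at hST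
    push_neg at hST
    obtain ⟨x₀, hx₀⟩ := hST
    have hcnt : T.count x₀ < S.count x₀ := hx₀
    -- point where σ is positive
    obtain ⟨t₀, ht₀⟩ : ∃ t, σ t ≠ 0 := by
      by_contra h; push_neg at h; exact hσne (funext h)
    have ht₀pos : 0 < σ t₀ := (hσ0 t₀).lt_of_ne (Ne.symm ht₀)
    -- radius of support
    obtain ⟨R, hR⟩ := hσsupp.isBounded.subset_closedBall 0
    have hzero : ∀ t : ℝ, R < |t| → σ t = 0 := by
      intro t ht
      apply image_eq_zero_of_notMem_tsupport
      intro hmem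
      have := hR hmem
      rw [Metric.mem_closedBall, Real.dist_eq, sub_zero] at this
      linarith
    -- generic direction
    set Y : Finset (Fin d → ℝ) := T.toFinset.erase x₀ with hY
    obtain ⟨a, ha⟩ := exists_generic (Y.image (fun y => y - x₀)) (by
      intro v hv
      obtain ⟨y, hy, rfl⟩ := Finset.mem_image.mp hv
      exact sub_ne_zero.mpr (Finset.ne_of_mem_erase hy))
    have ha' : ∀ y ∈ Y, a ⬝ᵥ (y - x₀) ≠ 0 :=
      fun y hy => ha _ (Finset.mem_image_of_mem _ hy)
    -- scale
    set K : ℝ := R + |t₀| + 1 with hK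
    obtain ⟨lam, hlam⟩ : ∃ lam : ℝ, ∀ y ∈ Y, K / |a ⬝ᵥ (y - x₀)| ≤ lam := by
      obtain ⟨M, hM⟩ := (Y.image (fun y => K / |a ⬝ᵥ (y - x₀)|)).exists_le
      exact ⟨M, fun y hy => hM _ (Finset.mem_image_of_mem _ hy)⟩
    set a' : Fin d → ℝ := lam • a with ha'def
    set b : ℝ := t₀ - lam * (a ⬝ᵥ x₀) with hb
    have key : ∀ x : Fin d → ℝ, a' ⬝ᵥ x + b = t₀ + lam * (a ⬝ᵥ (x - x₀)) := by
      intro x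
      rw [ha'def, hb, smul_dotProduct, smul_eq_mul, dotProduct_sub]
      ring
    have hfx₀ : σ (a' ⬝ᵥ x₀ + b) = σ t₀ := by rw [key]; simp
    have hfy : ∀ y ∈ Y, σ (a' ⬝ᵥ y + b) = 0 := by
      intro y hy
      apply hzero
      rw [key]
      have h1 : 0 < |a ⬝ᵥ (y - x₀)| := abs_pos.mpr (ha' y hy)
      have h2 : K / |a ⬝ᵥ (y - x₀)| ≤ lam := hlam y hy
      have h3 : K ≤ lam * |a ⬝ᵥ (y - x₀)| := by
        rw [div_le_iff₀ h1] at h2; linarith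
      have h4 : lam * |a ⬝ᵥ (y - x₀)| ≤ |lam * (a ⬝ᵥ (y - x₀))| := by
        rw [abs_mul]
        exact mul_le_mul_of_nonneg_right (le_abs_self lam) (abs_nonneg _)
      have h5 := abs_add_le (t₀ + lam * (a ⬝ᵥ (y - x₀))) (-t₀)
      have heq : t₀ + lam * (a ⬝ᵥ (y - x₀)) + -t₀ = lam * (a ⬝ᵥ (y - x₀)) := by ring
      rw [heq, abs_neg] at h5
      have hKval : K = R + |t₀| + 1 := hK
      linarith
    refine ⟨a', b, hM2 ?_⟩
    set f : (Fin d → ℝ) → ℝ := fun x => σ (a' ⬝ᵥ x + b) with hf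
    -- compute T sum
    have hTsum : (T.map f).sum = (T.count x₀ : ℝ) * σ t₀ := by
      have hsplit := Multiset.filter_add_not (fun x => x = x₀) T
      calc (T.map f).sum
          = ((T.filter (fun x => x = x₀) + T.filter (fun x => ¬ x = x₀)).map f).sum := by
            rw [hsplit]
        _ = ((T.filter (fun x => x = x₀)).map f).sum
            + ((T.filter (fun x => ¬ x = x₀)).map f).sum := by
            rw [Multiset.map_add, Multiset.sum_add]
        _ = (T.count x₀ : ℝ) * σ t₀ := by
            have e1 : T.filter (fun x => x = x₀) = Multiset.replicate (T.count x₀) x₀ :=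
              Multiset.filter_eq' T x₀
            have e2 : ((T.filter (fun x => x = x₀)).map f).sum = (T.count x₀ : ℝ) * σ t₀ := by
              rw [e1, Multiset.map_replicate, Multiset.sum_replicate, nsmul_eq_mul, hf]
              simp [hfx₀]
            have e3 : ((T.filter (fun x => ¬ x = x₀)).map f).sum = 0 := by
              apply Multiset.sum_eq_zero
              intro z hz
              obtain ⟨y, hy, rfl⟩ := Multiset.mem_map.mp hz
              have hyT : y ∈ T := Multiset.mem_of_mem_filter hy
              have hyne : ¬ y = x₀ := (Multiset.mem_filter.mp hy).2
              show σ (a' ⬝ᵥ y + b) = 0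
              exact hfy y (Finset.mem_erase.mpr ⟨hyne, Multiset.mem_toFinset.mpr hyT⟩)
            rw [e2, e3, add_zero]
    -- lower bound S sum
    have hSsum : (S.count x₀ : ℝ) * σ t₀ ≤ (S.map f).sum := by
      have hle : Multiset.replicate (S.count x₀) x₀ ≤ S := by
        rw [← Multiset.filter_eq' S x₀]
        exact Multiset.filter_le _ S
      have h := map_sum_mono f (fun x => hσ0 _) hle
      rw [Multiset.map_replicate, Multiset.sum_replicate, nsmul_eq_mul] at h
      have hfx₀' : f x₀ = σ t₀ := hfx₀
      rwa [hfx₀'] at h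
    have : (T.count x₀ : ℝ) * σ t₀ < (S.count x₀ : ℝ) * σ t₀ := by
      apply mul_lt_mul_of_pos_right _ ht₀pos
      exact_mod_cast hcnt
    show ((T.map fun x => σ (a' ⬝ᵥ x + b)).sum) < ((S.map fun x => σ (a' ⬝ᵥ x + b)).sum)
    calc (T.map f).sum = (T.count x₀ : ℝ) * σ t₀ := hTsum
      _ < (S.count x₀ : ℝ) * σ t₀ := this
      _ ≤ (S.map f).sum := hSsum
end

section
/- Let V ⊆ ℝ^d, let M₂ : ℝ → ℝ be strictly monotone increasing, and consider affine maps 𝒜₂(t) = A₂t + b₂ with A₂ ∈ ℝ^{3×d}, b₂ ∈ ℝ³, and 𝒜₁(z) = a₁ᵀz + b₁ with a₁ ∈ ℝ³, b₁ ∈ ℝ. Then the two-layer ReLU set functions F(S; 𝒜₁, 𝒜₂) = M₂(Σ_{x∈S} ReLU(𝒜₁(ReLU(𝒜₂(x))))) on finite multisets over V, parameterized by (A₂, b₂, a₁, b₁), are weakly MAS: for every parameter choice F is monotone (S ⊆ T implies F(S) ≤ F(T)), and whenever S ⊄ T there exists a parameter choice with F(S) > F(T). -/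
open scoped Matrix

lemma exists_dot_ne {d : ℕ} (Y : Finset (Fin d → ℝ)) (hY : ∀ v ∈ Y, v ≠ 0) :
    ∃ w : Fin d → ℝ, ∀ v ∈ Y, w ⬝ᵥ v ≠ 0 := by
  classical
  induction Y using Finset.induction_on with
  | empty => exact ⟨0, by simp⟩
  | @insert v Y hv ih =>
    obtain ⟨w, hw⟩ := ih (fun u hu => hY u (Finset.mem_insert_of_mem hu))
    have hv0 : v ≠ 0 := hY v (Finset.mem_insert_self _ _)
    obtain ⟨t, ht⟩ := Finset.exists_notMem
      ((insert v Y).image (fun u => -(w ⬝ᵥ u) / (v ⬝ᵥ u)))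
    refine ⟨w + t • v, ?_⟩
    intro u hu
    have hdot : (w + t • v) ⬝ᵥ u = w ⬝ᵥ u + t * (v ⬝ᵥ u) := by
      simp [add_dotProduct, smul_dotProduct, smul_eq_mul]
    by_cases hvu : v ⬝ᵥ u = 0
    · have hu' : u ∈ Y := by
        rcases Finset.mem_insert.mp hu with rfl | h
        · exact absurd ((dotProduct_self_eq_zero).mp hvu) hv0
        · exact h
      rw [hdot, hvu, mul_zero, add_zero]
      exact hw u hu'
    · intro h0
      rw [hdot] at h0
      apply ht
      refine Finset.mem_image.mpr ⟨u, hu, ?_⟩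
      field_simp
      linarith

lemma sum_map_indicator {V : Type*} [DecidableEq V] (S : Multiset V) (x : V) (ε : ℝ) :
    (S.map (fun y => if y = x then ε else 0)).sum = (S.count x : ℝ) * ε := by
  induction S using Multiset.induction_on with
  | empty => simp
  | cons a s ih =>
    rw [Multiset.map_cons, Multiset.sum_cons, ih, Multiset.count_cons]
    by_cases h : a = x
    · simp [h]; ring
    · simp [h, Ne.symm h]

lemma map_coe_eq {d : ℕ} {V : Set (Fin d → ℝ)} (S : Multiset V) (f : (Fin d → ℝ) → ℝ) :
    (Multiset.map f (do let a ← S; pure ((a : V) : Fin d → ℝ))) =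
    Multiset.map (fun a : V => f (a : Fin d → ℝ)) S := by
  simp [Multiset.bind_singleton]


/-- The two-layer ReLU set function
`F(S; 𝒜₁, 𝒜₂) = M₂(∑_{x∈S} ReLU(𝒜₁(ReLU(𝒜₂ x))))`, where `𝒜₂(t) = A₂ t + b₂` maps
`ℝ^d → ℝ³` and `𝒜₁(z) = a₁ᵀ z + b₁` maps `ℝ³ → ℝ`, and `ReLU(t) = max t 0` entrywise. -/
noncomputable def relu2F {d : ℕ} (V : Set (Fin d → ℝ)) (M2 : ℝ → ℝ)
    (A2 : Matrix (Fin 3) (Fin d) ℝ) (b2 : Fin 3 → ℝ) (a1 : Fin 3 → ℝ) (b1 : ℝ)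
    (S : Multiset V) : ℝ :=
  M2 ((S.map (fun x =>
    max (a1 ⬝ᵥ (fun i => max (A2.mulVec (x : Fin d → ℝ) i + b2 i) 0) + b1) 0)).sum)

/-- For `V ⊆ ℝ^d` and strictly monotone `M₂`, the two-layer ReLU set functions
`F(S; 𝒜₁, 𝒜₂) = M₂(∑_{x∈S} ReLU(𝒜₁(ReLU(𝒜₂ x))))`, parameterized by
`(A₂, b₂, a₁, b₁)`, are weakly MAS: pointwise monotone for every parameter choice,
and whenever `S ⊄ T` there is a parameter choice with `F(S) > F(T)`. -/
theorem stmt11 {d : ℕ} (V : Set (Fin d → ℝ)) (M2 : ℝ → ℝ) (hM2 : StrictMono M2) :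
    (∀ (A2 : Matrix (Fin 3) (Fin d) ℝ) (b2 : Fin 3 → ℝ) (a1 : Fin 3 → ℝ) (b1 : ℝ)
      (S T : Multiset V), S ≤ T →
        relu2F V M2 A2 b2 a1 b1 S ≤ relu2F V M2 A2 b2 a1 b1 T) ∧
    (∀ S T : Multiset V, ¬ S ≤ T →
      ∃ (A2 : Matrix (Fin 3) (Fin d) ℝ) (b2 : Fin 3 → ℝ) (a1 : Fin 3 → ℝ) (b1 : ℝ),
        relu2F V M2 A2 b2 a1 b1 T < relu2F V M2 A2 b2 a1 b1 S) := by
  classical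
  constructor
  · intro A2 b2 a1 b1 S T hST
    obtain ⟨U, rfl⟩ := Multiset.le_iff_exists_add.mp hST
    unfold relu2F
    apply hM2.monotone
    rw [map_coe_eq, map_coe_eq, Multiset.map_add, Multiset.sum_add]
    have : 0 ≤ (U.map (fun x : V =>
        max (a1 ⬝ᵥ (fun i => max (A2.mulVec (x : Fin d → ℝ) i + b2 i) 0) + b1) 0)).sum :=
      Multiset.sum_nonneg (by
        intro a ha
        obtain ⟨y, _, rfl⟩ := Multiset.mem_map.mp ha
        exact le_max_right _ _)
    linarith
  · intro S T hST
    rw [Multiset.le_iff_count] at hST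
    push_neg at hST
    obtain ⟨x, hx⟩ := hST
    set D : Finset V := (S.toFinset ∪ T.toFinset).erase x with hD
    have hxD : ∀ y ∈ D, y ≠ x := fun y hy => Finset.ne_of_mem_erase hy
    obtain ⟨w, hw⟩ := exists_dot_ne
      (D.image (fun y : V => ((y : Fin d → ℝ) - (x : Fin d → ℝ))))
      (by
        intro v hv
        obtain ⟨y, hy, rfl⟩ := Finset.mem_image.mp hv
        intro h
        exact hxD y hy (Subtype.ext (by rwa [sub_eq_zero] at h)))
    set c : ℝ := w ⬝ᵥ (x : Fin d → ℝ) with hc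
    have hsep : ∀ y ∈ D, w ⬝ᵥ (y : Fin d → ℝ) - c ≠ 0 := by
      intro y hy
      have := hw _ (Finset.mem_image_of_mem _ hy)
      rwa [dotProduct_sub] at this
    set E : Finset ℝ :=
      insert 1 (D.image (fun y : V => |w ⬝ᵥ (y : Fin d → ℝ) - c|)) with hE
    have hEne : E.Nonempty := ⟨1, Finset.mem_insert_self _ _⟩
    set ε : ℝ := E.min' hEne with hε
    have hεpos : 0 < ε := by
      have hm := E.min'_mem hEne
      rw [← hε] at hm
      rcases Finset.mem_insert.mp hm with h | h
      · rw [h]; norm_num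
      · obtain ⟨y, hy, h⟩ := Finset.mem_image.mp h
        rw [← h]
        exact abs_pos.mpr (hsep y hy)
    have hεle : ∀ y ∈ D, ε ≤ |w ⬝ᵥ (y : Fin d → ℝ) - c| := by
      intro y hy
      exact E.min'_le _ (Finset.mem_insert_of_mem (Finset.mem_image_of_mem _ hy))
    refine ⟨Matrix.of (fun _ j => w j), ![ε - c, -c, -c - ε], ![1, -2, 1], 0, ?_⟩
    have hval : ∀ y : V, y = x ∨ y ∈ D →
        max ((![1, -2, 1] : Fin 3 → ℝ) ⬝ᵥ
          (fun i => max ((Matrix.of (fun _ j => w j)).mulVec (y : Fin d → ℝ) i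
            + (![ε - c, -c, -c - ε] : Fin 3 → ℝ) i) 0) + 0) 0
        = if y = x then ε else 0 := by
      intro y hy
      have hmv : ∀ i : Fin 3, (Matrix.of (fun _ j => w j)).mulVec (y : Fin d → ℝ) i
          = w ⬝ᵥ (y : Fin d → ℝ) := fun i => rfl
      set s : ℝ := w ⬝ᵥ (y : Fin d → ℝ) with hs
      have hdp : (![1, -2, 1] : Fin 3 → ℝ) ⬝ᵥ
          (fun i => max ((Matrix.of (fun _ j => w j)).mulVec (y : Fin d → ℝ) i
            + (![ε - c, -c, -c - ε] : Fin 3 → ℝ) i) 0)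
          = max (s + (ε - c)) 0 - 2 * max (s + -c) 0 + max (s + (-c - ε)) 0 := by
        simp [dotProduct, Fin.sum_univ_three, hmv]
        ring
      rw [hdp, add_zero]
      rcases hy with rfl | hyD
      · rw [if_pos rfl]
        have hsc : s = c := rfl
        have h1 : s + (ε - c) = ε := by rw [hsc]; ring
        have h2 : s + -c = 0 := by rw [hsc]; ring
        have h3 : s + (-c - ε) = -ε := by rw [hsc]; ring
        rw [h1, h2, h3]
        have hA : max ε 0 = ε := max_eq_left hεpos.le
        have hC : max (-ε) 0 = 0 := max_eq_right (by linarith)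
        rw [hA, hC, max_self]
        norm_num [hA]
      · rw [if_neg (hxD y hyD)]
        have := hεle y hyD
        rcases le_abs.mp this with h | h
        · have e1 : max (s + (ε - c)) 0 = s + (ε - c) := max_eq_left (by linarith)
          have e2 : max (s + -c) 0 = s + -c := max_eq_left (by linarith)
          have e3 : max (s + (-c - ε)) 0 = s + (-c - ε) := max_eq_left (by linarith)
          rw [e1, e2, e3]
          have h0 : s + (ε - c) - 2 * (s + -c) + (s + (-c - ε)) = 0 := by ring
          rw [h0, max_self]
        · have h' : s - c ≤ -ε := by linarith [neg_abs_le (s - c)]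
          have e1 : max (s + (ε - c)) 0 = 0 := max_eq_right (by linarith)
          have e2 : max (s + -c) 0 = 0 := max_eq_right (by linarith)
          have e3 : max (s + (-c - ε)) 0 = 0 := max_eq_right (by linarith)
          rw [e1, e2, e3]
          norm_num
    unfold relu2F
    apply hM2
    rw [map_coe_eq, map_coe_eq]
    have hmemS : ∀ y ∈ S, y = x ∨ y ∈ D := by
      intro y hy
      by_cases h : y = x
      · exact Or.inl h
      · exact Or.inr (Finset.mem_erase.mpr ⟨h,
          Finset.mem_union_left _ (Multiset.mem_toFinset.mpr hy)⟩)
    have hmemT : ∀ y ∈ T, y = x ∨ y ∈ D := by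
      intro y hy
      by_cases h : y = x
      · exact Or.inl h
      · exact Or.inr (Finset.mem_erase.mpr ⟨h,
          Finset.mem_union_right _ (Multiset.mem_toFinset.mpr hy)⟩)
    rw [Multiset.map_congr rfl (fun y hy => hval y (hmemS y hy)),
      Multiset.map_congr rfl (fun y hy => hval y (hmemT y hy)),
      sum_map_indicator, sum_map_indicator]
    have : (T.count x : ℝ) < (S.count x : ℝ) := by exact_mod_cast hx
    exact mul_lt_mul_of_pos_right this hεpos
end

section
/- Let V be a finite ground set, let k be a natural number, and let F : P_{≤k}(V) → ℝ^m be a MAS function. Then for every monotone multiset-to-vector function f : P_{≤k}(V) → ℝ^s there exists a monotone vector-to-vector function M : ℝ^m → ℝ^s such that f(S) = M(F(S)) for all S ∈ P_{≤k}(V). -/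
/-! Since `F` is separating, `F T ≤ F S` forces `T ≤ S` and hence `f T ≤ f S`. So on the finitely
many values of `F`, the map `F S ↦ f S` is well defined and monotone, and
`M x = sup {f T | F T ≤ x}` extends it monotonically to all of `ℝ^m`. -/

theorem Multiset.finite_subtype_card_le (V : Type*) [Finite V] (k : ℕ) :
    Finite {S : Multiset V // Multiset.card S ≤ k} := by
  classical
  exact Finite.of_injective
      (fun S v => (⟨S.val.count v, Nat.lt_succ_of_le ((S.val.count_le_card v).trans S.prop)⟩ :
        Fin (k + 1)))
      fun S T h => Subtype.ext <| Multiset.ext.mpr fun v => congrArg Fin.val (congrFun h v)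

/-- The values of `f` outside `{T | F T ≤ x}` are replaced by a common lower bound, so that the
supremum is taken over a nonempty finite family. -/
theorem exists_monotone_comp_eq_of_le_imp_le {α β γ : Type*} [Finite α] [Nonempty α]
    [Preorder β] [Lattice γ] (F : α → β) (f : α → γ)
    (h : ∀ S T, F S ≤ F T → f S ≤ f T) :
    ∃ M : β → γ, Monotone M ∧ ∀ a, f a = M (F a) := by
  classical
  have := Fintype.ofFinite α
  set b := Finset.univ.inf' Finset.univ_nonempty f
  have hb : ∀ T, b ≤ f T := fun T => Finset.inf'_le f (Finset.mem_univ T)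
  refine ⟨fun x => Finset.univ.sup' Finset.univ_nonempty
    fun T => if F T ≤ x then f T else b, fun x y hxy => ?_, fun S => ?_⟩
  · refine Finset.sup'_mono_fun fun T _ => ?_
    by_cases hT : F T ≤ x
    · simp [hT, hT.trans hxy]
    · split_ifs <;> simp [hb]
  · refine le_antisymm (Finset.le_sup'_of_le _ (Finset.mem_univ S) (by simp)) ?_
    refine Finset.sup'_le _ _ fun T _ => ?_
    split_ifs with hT
    · exact h T S hT
    · exact hb S

theorem stmt14_general (V : Type*) [Fintype V] (k m s : ℕ)
    (F : {S : Multiset V // Multiset.card S ≤ k} → Fin m → ℝ)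
    (hsep : ∀ S T, F S ≤ F T → S.val ≤ T.val)
    (f : {S : Multiset V // Multiset.card S ≤ k} → Fin s → ℝ)
    (hf : ∀ S T, S.val ≤ T.val → f S ≤ f T) :
    ∃ M : (Fin m → ℝ) → (Fin s → ℝ), Monotone M ∧ ∀ S, f S = M (F S) := by
  have := Multiset.finite_subtype_card_le V k
  have : Nonempty {S : Multiset V // Multiset.card S ≤ k} := ⟨⟨0, Nat.zero_le k⟩⟩
  exact exists_monotone_comp_eq_of_le_imp_le F f fun S T hST => hf S T (hsep S T hST)

/-- Universality: for a finite ground set `V` and a MAS function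
`F : P_{≤k}(V) → ℝ^m`, every monotone multiset-to-vector function
`f : P_{≤k}(V) → ℝ^s` factors as `f = M ∘ F` for some monotone
vector-to-vector function `M : ℝ^m → ℝ^s`. -/
theorem stmt14 (V : Type*) [Fintype V] (k m s : ℕ)
    (F : {S : Multiset V // Multiset.card S ≤ k} → Fin m → ℝ)
    (hmono : ∀ S T, S.val ≤ T.val → F S ≤ F T)
    (hsep : ∀ S T, F S ≤ F T → S.val ≤ T.val)
    (f : {S : Multiset V // Multiset.card S ≤ k} → Fin s → ℝ)
    (hf : ∀ S T, S.val ≤ T.val → f S ≤ f T) :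
    ∃ M : (Fin m → ℝ) → (Fin s → ℝ), Monotone M ∧ ∀ S, f S = M (F S) :=
  stmt14_general V k m s F hsep f hf
end

section
/- Let σ : ℝ → ℝ be a hat activation (which is hence Lipschitz with some constant κ₂ > 0), let V ⊂ ℝ^d be compact with sup_{v∈V} ‖v‖ ≤ 1, and fix a padding point z ∈ ℝ^d with ‖z‖ ≥ 3. Define the random scalar set function F(S) = Σ_{x∈S} σ((aᵀx − b)/c) on multisets over V of cardinality at most k, with a ~ Unif(S^{d−1}), b ~ Unif(−1, 1), c ~ Unif(0, 2) independent. Then there exists a constant C > 0 such that for all multisets S = {x_1,...,x_M}, T = {y_1,...,y_N} over V of cardinality at most k with M ≤ N: E_{a,b,c} |F(S) − F(T)| ≤ C · W^{(k)}(S, T), where W^{(k)}(S, T) = min over injective maps τ : {1,...,M} → {1,...,N} of [ Σ_{i=1}^M ‖x_i − y_{τ(i)}‖ + Σ_{j ∉ image(τ)} ‖y_j − z‖ ] is the augmented Wasserstein distance with padding z. -/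
open MeasureTheory
open scoped RealInnerProductSpace

/-- The augmented Wasserstein distance with padding `z`:
`W^{(k)}(S,T) = min_{τ injective} [ ∑_i ‖x_i − y_{τ(i)}‖ + ∑_{j ∉ image τ} ‖y_j − z‖ ]`,
for the multisets represented by the tuples `x : Fin M → ℝ^d`, `y : Fin N → ℝ^d`. -/
noncomputable def wAug {d M N : ℕ} (z : EuclideanSpace ℝ (Fin d))
    (x : Fin M → EuclideanSpace ℝ (Fin d)) (y : Fin N → EuclideanSpace ℝ (Fin d)) : ℝ :=
  sInf {r : ℝ | ∃ τ : Fin M ↪ Fin N,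
    r = ∑ i, ‖x i - y (τ i)‖ +
        ∑ j ∈ Finset.univ.filter (fun j => ∀ i, τ i ≠ j), ‖y j - z‖}

/-- The uniform probability measure on the unit sphere `S^{d−1} ⊂ ℝ^d`. -/
noncomputable def sphereUnif (d : ℕ) :
    Measure (Metric.sphere (0 : EuclideanSpace ℝ (Fin d)) 1) :=
  ((volume : Measure (EuclideanSpace ℝ (Fin d))).toSphere Set.univ)⁻¹ •
    (volume : Measure (EuclideanSpace ℝ (Fin d))).toSphere

/-- The uniform probability measure on `(−1, 1)`. -/
noncomputable def unifIoo : Measure ℝ := (2 : ENNReal)⁻¹ • volume.restrict (Set.Ioo (-1) 1)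

/-- The uniform probability measure on `(0, 2)`. -/
noncomputable def unifIoo02 : Measure ℝ := (2 : ENNReal)⁻¹ • volume.restrict (Set.Ioo 0 2)

section Aux

lemma sphereUnif_univ_le (d : ℕ) : (sphereUnif d) Set.univ ≤ 1 := by
  unfold sphereUnif
  rw [Measure.smul_apply, smul_eq_mul]
  set r := (volume : Measure (EuclideanSpace ℝ (Fin d))).toSphere Set.univ with hr
  rcases eq_or_ne r 0 with h | h
  · simp [h]
  rcases eq_or_ne r ⊤ with h' | h'
  · simp [h']
  · rw [ENNReal.inv_mul_cancel h h']

lemma unifIoo_univ : unifIoo Set.univ = 1 := by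
  unfold unifIoo
  rw [Measure.smul_apply, smul_eq_mul, Measure.restrict_apply_univ, Real.volume_Ioo]
  norm_num
  exact ENNReal.inv_mul_cancel two_ne_zero ENNReal.ofNat_ne_top

lemma unifIoo02_univ : unifIoo02 Set.univ = 1 := by
  unfold unifIoo02
  rw [Measure.smul_apply, smul_eq_mul, Measure.restrict_apply_univ, Real.volume_Ioo]
  norm_num
  exact ENNReal.inv_mul_cancel two_ne_zero ENNReal.ofNat_ne_top

instance : IsFiniteMeasure unifIoo := by
  constructor; rw [unifIoo_univ]; exact ENNReal.one_lt_top

instance : IsFiniteMeasure unifIoo02 := by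
  constructor; rw [unifIoo02_univ]; exact ENNReal.one_lt_top

variable {σ : ℝ → ℝ} {κ₂ R : ℝ}

/-- Key `b`-integral bound: for fixed `u v c` with `0 < c`,
the average over `b` of the difference is controlled by `|u - v|`, uniformly in `c`. -/
lemma key_b (hκ : 0 ≤ κ₂) (hR : 0 < R)
    (hsupp : ∀ t : ℝ, R < |t| → σ t = 0)
    (hlip : ∀ s t : ℝ, |σ s - σ t| ≤ κ₂ * |s - t|)
    (u v c : ℝ) (hc : 0 < c) :
    ∫⁻ b, ENNReal.ofReal |σ ((u - b) / c) - σ ((v - b) / c)| ∂unifIoo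
      ≤ ENNReal.ofReal (4 * R * κ₂ * |u - v|) := by
  set E : Set ℝ := Set.Icc (u - R * c) (u + R * c) ∪ Set.Icc (v - R * c) (v + R * c) with hE
  have hEm : MeasurableSet E := measurableSet_Icc.union measurableSet_Icc
  set K : ℝ := κ₂ * |u - v| / c with hK
  have hK0 : 0 ≤ K := by positivity
  have hside : ∀ w b : ℝ, b ∉ Set.Icc (w - R * c) (w + R * c) → σ ((w - b) / c) = 0 := by
    intro w b hb
    have hRc : (0:ℝ) < R * c := mul_pos hR hc
    apply hsupp
    rw [Set.mem_Icc, not_and_or] at hb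
    have : R * c < |w - b| := by
      rcases hb with hb | hb
      · push_neg at hb
        rw [abs_of_pos (by linarith)]; linarith
      · push_neg at hb
        rw [abs_of_neg (by linarith)]; linarith
    rw [abs_div, abs_of_pos hc, lt_div_iff₀ hc]
    linarith
  have hpt : ∀ b, ENNReal.ofReal |σ ((u - b) / c) - σ ((v - b) / c)| ≤
      E.indicator (fun _ => ENNReal.ofReal K) b := by
    intro b
    by_cases hb : b ∈ E
    · rw [Set.indicator_of_mem hb]
      apply ENNReal.ofReal_le_ofReal
      calc |σ ((u - b) / c) - σ ((v - b) / c)| ≤ κ₂ * |(u - b) / c - (v - b) / c| :=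
            hlip _ _
        _ = K := by
            have h1 : (u - b) / c - (v - b) / c = (u - v) / c := by ring
            rw [h1, abs_div, abs_of_pos hc, hK, mul_div_assoc]
    · rw [Set.indicator_of_notMem hb]
      rw [hE, Set.mem_union, not_or] at hb
      rw [hside u b hb.1, hside v b hb.2]
      simp
  calc ∫⁻ b, ENNReal.ofReal |σ ((u - b) / c) - σ ((v - b) / c)| ∂unifIoo
      ≤ ∫⁻ b, E.indicator (fun _ => ENNReal.ofReal K) b ∂unifIoo := lintegral_mono hpt
    _ = ENNReal.ofReal K * unifIoo E := lintegral_indicator_const hEm _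
    _ ≤ ENNReal.ofReal K * (ENNReal.ofReal (2 * (R * c)) + ENNReal.ofReal (2 * (R * c))) := by
        apply mul_le_mul_right
        unfold unifIoo
        rw [Measure.smul_apply, smul_eq_mul]
        calc (2 : ENNReal)⁻¹ * (volume.restrict (Set.Ioo (-1) 1)) E
            ≤ 1 * (volume.restrict (Set.Ioo (-1) 1)) E := by
              gcongr
              exact ENNReal.inv_le_one.mpr one_le_two
          _ = (volume.restrict (Set.Ioo (-1) 1)) E := one_mul _
          _ ≤ volume E := Measure.restrict_le_self E
          _ ≤ volume (Set.Icc (u - R * c) (u + R * c)) +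
              volume (Set.Icc (v - R * c) (v + R * c)) := measure_union_le _ _
          _ = ENNReal.ofReal (2 * (R * c)) + ENNReal.ofReal (2 * (R * c)) := by
              rw [Real.volume_Icc, Real.volume_Icc]
              ring_nf
    _ = ENNReal.ofReal (4 * R * κ₂ * |u - v|) := by
        rw [← ENNReal.ofReal_add (by positivity) (by positivity),
            ← ENNReal.ofReal_mul hK0]
        congr 1
        rw [hK]
        field_simp
        ring

/-- Key `(b,c)`-integral bound. -/
lemma key_bc (hκ : 0 ≤ κ₂) (hR : 0 < R)
    (hsupp : ∀ t : ℝ, R < |t| → σ t = 0)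
    (hlip : ∀ s t : ℝ, |σ s - σ t| ≤ κ₂ * |s - t|)
    (hσm : Measurable σ) (u v : ℝ) :
    ∫⁻ p : ℝ × ℝ, ENNReal.ofReal |σ ((u - p.1) / p.2) - σ ((v - p.1) / p.2)|
        ∂(unifIoo.prod unifIoo02)
      ≤ ENNReal.ofReal (4 * R * κ₂ * |u - v|) := by
  have hm : Measurable fun p : ℝ × ℝ =>
      ENNReal.ofReal |σ ((u - p.1) / p.2) - σ ((v - p.1) / p.2)| := by
    apply ENNReal.measurable_ofReal.comp
    apply Measurable.abs
    exact ((hσm.comp ((measurable_const.sub measurable_fst).div measurable_snd)).sub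
      (hσm.comp ((measurable_const.sub measurable_fst).div measurable_snd)))
  rw [lintegral_prod_symm _ hm.aemeasurable]
  set D := ENNReal.ofReal (4 * R * κ₂ * |u - v|) with hD
  calc ∫⁻ c, ∫⁻ b, ENNReal.ofReal |σ ((u - b) / c) - σ ((v - b) / c)| ∂unifIoo ∂unifIoo02
      ≤ ∫⁻ _, D ∂unifIoo02 := by
        unfold unifIoo02
        rw [lintegral_smul_measure, lintegral_smul_measure]
        apply mul_le_mul_right
        apply setLIntegral_mono' measurableSet_Ioo
        intro c hc
        exact key_b hκ hR hsupp hlip u v c hc.1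
    _ = D * unifIoo02 Set.univ := lintegral_const D
    _ ≤ D * 1 := by rw [unifIoo02_univ]
    _ = D := mul_one D

/-- Key full-product bound for a matched pair. -/
lemma key_pair {d : ℕ} (hκ : 0 ≤ κ₂) (hR : 0 < R)
    (hsupp : ∀ t : ℝ, R < |t| → σ t = 0)
    (hlip : ∀ s t : ℝ, |σ s - σ t| ≤ κ₂ * |s - t|)
    (hσm : Measurable σ) (p q : EuclideanSpace ℝ (Fin d)) :
    ∫⁻ ω : Metric.sphere (0 : EuclideanSpace ℝ (Fin d)) 1 × ℝ × ℝ,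
        ENNReal.ofReal |σ ((⟪(ω.1 : EuclideanSpace ℝ (Fin d)), p⟫ - ω.2.1) / ω.2.2) -
          σ ((⟪(ω.1 : EuclideanSpace ℝ (Fin d)), q⟫ - ω.2.1) / ω.2.2)|
        ∂((sphereUnif d).prod (unifIoo.prod unifIoo02))
      ≤ ENNReal.ofReal (4 * R * κ₂ * ‖p - q‖) := by
  have hinnm : ∀ w : EuclideanSpace ℝ (Fin d),
      Measurable fun a : Metric.sphere (0 : EuclideanSpace ℝ (Fin d)) 1 =>
        (⟪(a : EuclideanSpace ℝ (Fin d)), w⟫ : ℝ) := fun w =>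
    (continuous_subtype_val.inner continuous_const).measurable
  have hm : Measurable fun ω : Metric.sphere (0 : EuclideanSpace ℝ (Fin d)) 1 × ℝ × ℝ =>
      ENNReal.ofReal |σ ((⟪(ω.1 : EuclideanSpace ℝ (Fin d)), p⟫ - ω.2.1) / ω.2.2) -
        σ ((⟪(ω.1 : EuclideanSpace ℝ (Fin d)), q⟫ - ω.2.1) / ω.2.2)| := by
    apply ENNReal.measurable_ofReal.comp
    apply Measurable.abs
    apply Measurable.sub <;>
    · apply hσm.comp
      exact (((hinnm _).comp measurable_fst).sub
        (measurable_fst.comp measurable_snd)).div (measurable_snd.comp measurable_snd)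
  rw [lintegral_prod _ hm.aemeasurable]
  set D := ENNReal.ofReal (4 * R * κ₂ * ‖p - q‖) with hD
  calc ∫⁻ a, ∫⁻ bc : ℝ × ℝ,
        ENNReal.ofReal |σ ((⟪(a : EuclideanSpace ℝ (Fin d)), p⟫ - bc.1) / bc.2) -
          σ ((⟪(a : EuclideanSpace ℝ (Fin d)), q⟫ - bc.1) / bc.2)|
        ∂(unifIoo.prod unifIoo02) ∂(sphereUnif d)
      ≤ ∫⁻ _, D ∂(sphereUnif d) := by
        apply lintegral_mono
        intro a
        refine (key_bc hκ hR hsupp hlip hσm _ _).trans (ENNReal.ofReal_le_ofReal ?_)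
        have h1 : |(⟪(a : EuclideanSpace ℝ (Fin d)), p⟫ : ℝ) - ⟪(a : EuclideanSpace ℝ (Fin d)), q⟫|
            ≤ ‖p - q‖ := by
          rw [← inner_sub_right]
          calc |(⟪(a : EuclideanSpace ℝ (Fin d)), p - q⟫ : ℝ)|
              ≤ ‖(a : EuclideanSpace ℝ (Fin d))‖ * ‖p - q‖ := abs_real_inner_le_norm _ _
            _ = ‖p - q‖ := by rw [norm_eq_of_mem_sphere a, one_mul]
        exact mul_le_mul_of_nonneg_left h1 (by positivity)
    _ = D * (sphereUnif d) Set.univ := lintegral_const D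
    _ ≤ D * 1 := mul_le_mul_right (sphereUnif_univ_le d) D
    _ = D := mul_one D

/-- Bound for an unmatched point: the expectation of a single `σ`-term is at most `B`. -/
lemma key_single {d : ℕ} {B : ℝ} (hB : ∀ t, σ t ≤ B) (hσm : Measurable σ)
    (q : EuclideanSpace ℝ (Fin d)) :
    ∫⁻ ω : Metric.sphere (0 : EuclideanSpace ℝ (Fin d)) 1 × ℝ × ℝ,
        ENNReal.ofReal (σ ((⟪(ω.1 : EuclideanSpace ℝ (Fin d)), q⟫ - ω.2.1) / ω.2.2))
        ∂((sphereUnif d).prod (unifIoo.prod unifIoo02))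
      ≤ ENNReal.ofReal B := by
  have hmass : ((sphereUnif d).prod (unifIoo.prod unifIoo02)) Set.univ ≤ 1 := by
    rw [← Set.univ_prod_univ, Measure.prod_prod, ← Set.univ_prod_univ, Measure.prod_prod,
      unifIoo_univ, unifIoo02_univ, mul_one, mul_one]
    exact sphereUnif_univ_le d
  calc ∫⁻ ω : Metric.sphere (0 : EuclideanSpace ℝ (Fin d)) 1 × ℝ × ℝ,
        ENNReal.ofReal (σ ((⟪(ω.1 : EuclideanSpace ℝ (Fin d)), q⟫ - ω.2.1) / ω.2.2))
        ∂((sphereUnif d).prod (unifIoo.prod unifIoo02))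
      ≤ ∫⁻ _, ENNReal.ofReal B ∂((sphereUnif d).prod (unifIoo.prod unifIoo02)) :=
        lintegral_mono fun ω => ENNReal.ofReal_le_ofReal (hB _)
    _ = ENNReal.ofReal B * ((sphereUnif d).prod (unifIoo.prod unifIoo02)) Set.univ :=
        lintegral_const _
    _ ≤ ENNReal.ofReal B * 1 := mul_le_mul_right hmass _
    _ = ENNReal.ofReal B := mul_one _

end Aux

set_option maxHeartbeats 1000000 in
/-- Upper Lipschitz stability: for a (Lipschitz) hat activation `σ`, a compact `V ⊂ ℝ^d`
with `sup_{v∈V}‖v‖ ≤ 1`, a padding `z` with `‖z‖ ≥ 3`, and the random scalar set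
function `F(S) = ∑_{x∈S} σ((aᵀx − b)/c)` with `a ~ Unif(S^{d−1})`, `b ~ Unif(−1,1)`,
`c ~ Unif(0,2)` independent, there is `C > 0` such that for all multisets `S, T` over
`V` of cardinality at most `k` with `|S| ≤ |T|`,
`E|F(S) − F(T)| ≤ C · W^{(k)}(S,T)`. -/
theorem stmt17 {d k : ℕ} (σ : ℝ → ℝ) (κ₂ : ℝ) (hκ₂ : 0 < κ₂)
    (hσ0 : ∀ t, 0 ≤ σ t) (hσsupp : HasCompactSupport σ) (hσne : σ ≠ 0)
    (hσcont : Continuous σ) (hσlip : ∀ s t : ℝ, |σ s - σ t| ≤ κ₂ * |s - t|)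
    (V : Set (EuclideanSpace ℝ (Fin d))) (hV : IsCompact V)
    (hVnorm : ∀ v ∈ V, ‖v‖ ≤ 1)
    (z : EuclideanSpace ℝ (Fin d)) (hz : 3 ≤ ‖z‖) :
    ∃ C > (0 : ℝ), ∀ (M N : ℕ), M ≤ k → N ≤ k → M ≤ N →
      ∀ (x : Fin M → EuclideanSpace ℝ (Fin d)) (y : Fin N → EuclideanSpace ℝ (Fin d)),
        (∀ i, x i ∈ V) → (∀ j, y j ∈ V) →
        (∫ ω : Metric.sphere (0 : EuclideanSpace ℝ (Fin d)) 1 × ℝ × ℝ,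
            |(∑ i, σ ((⟪(ω.1 : EuclideanSpace ℝ (Fin d)), x i⟫ - ω.2.1) / ω.2.2)) -
             (∑ j, σ ((⟪(ω.1 : EuclideanSpace ℝ (Fin d)), y j⟫ - ω.2.1) / ω.2.2))|
            ∂((sphereUnif d).prod (unifIoo.prod unifIoo02))) ≤
          C * wAug z x y := by
  classical
  -- support radius R
  obtain ⟨r, hr⟩ := hσsupp.isBounded.subset_closedBall 0
  set R : ℝ := max r 1 with hRdef
  have hR : (0:ℝ) < R := lt_of_lt_of_le one_pos (le_max_right _ _)
  have hsupp : ∀ t : ℝ, R < |t| → σ t = 0 := by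
    intro t ht
    apply image_eq_zero_of_notMem_tsupport
    intro hmem
    have h1 := hr hmem
    rw [Metric.mem_closedBall, Real.dist_eq, sub_zero] at h1
    have : |t| ≤ R := h1.trans (le_max_left _ _)
    linarith
  -- uniform bound B
  obtain ⟨B₀, hB₀⟩ := hσcont.bounded_above_of_compact_support hσsupp
  set B : ℝ := max B₀ 1 with hBdef
  have hB1 : (1:ℝ) ≤ B := le_max_right _ _
  have hB : ∀ t, σ t ≤ B := by
    intro t
    calc σ t ≤ |σ t| := le_abs_self _
      _ = ‖σ t‖ := rfl
      _ ≤ B₀ := hB₀ t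
      _ ≤ B := le_max_left _ _
  set C : ℝ := 4 * R * κ₂ + B with hCdef
  have hC0 : (0:ℝ) < C := by positivity
  have hC1 : 4 * R * κ₂ ≤ C := by
    have : (0:ℝ) < B := lt_of_lt_of_le one_pos hB1
    linarith
  have hCB : B ≤ C := by
    have : (0:ℝ) ≤ 4 * R * κ₂ := by positivity
    linarith
  refine ⟨C, hC0, ?_⟩
  intro M N hMk hNk hMN x y hx hy
  set μ := (sphereUnif d).prod (unifIoo.prod unifIoo02) with hμ
  -- pick the optimal embedding
  set Sset : Set ℝ := {r : ℝ | ∃ τ : Fin M ↪ Fin N,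
    r = ∑ i, ‖x i - y (τ i)‖ +
        ∑ j ∈ Finset.univ.filter (fun j => ∀ i, τ i ≠ j), ‖y j - z‖} with hSset
  have hSrange : Sset = Set.range (fun τ : Fin M ↪ Fin N =>
      ∑ i, ‖x i - y (τ i)‖ +
        ∑ j ∈ Finset.univ.filter (fun j => ∀ i, τ i ≠ j), ‖y j - z‖) := by
    ext r; simp [hSset, eq_comm]
  have hfin : Sset.Finite := by rw [hSrange]; exact Set.finite_range _
  have hne : Sset.Nonempty := ⟨_, ⟨Fin.castLEEmb hMN, rfl⟩⟩
  have hmem : sInf Sset ∈ Sset := hne.csInf_mem hfin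
  obtain ⟨τ, hτ⟩ := hmem
  have hWaug : wAug z x y = ∑ i, ‖x i - y (τ i)‖ +
      ∑ j ∈ Finset.univ.filter (fun j => ∀ i, τ i ≠ j), ‖y j - z‖ := hτ
  set S1 : ℝ := ∑ i, ‖x i - y (τ i)‖ with hS1
  set A : Finset (Fin N) := Finset.univ.map τ with hA
  have hAc : Finset.univ.filter (fun j => ∀ i, τ i ≠ j) = Aᶜ := by
    ext j
    simp [hA, Finset.mem_compl, eq_comm]
  set S2 : ℝ := ∑ j ∈ Aᶜ, ‖y j - z‖ with hS2
  rw [hAc] at hWaug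
  have hS10 : 0 ≤ S1 := Finset.sum_nonneg fun _ _ => norm_nonneg _
  have hS20 : 0 ≤ S2 := Finset.sum_nonneg fun _ _ => norm_nonneg _
  -- notation
  set φ : EuclideanSpace ℝ (Fin d) → Metric.sphere (0 : EuclideanSpace ℝ (Fin d)) 1 × ℝ × ℝ → ℝ :=
    fun v ω => σ ((⟪(ω.1 : EuclideanSpace ℝ (Fin d)), v⟫ - ω.2.1) / ω.2.2) with hφ
  have hφm : ∀ v, Measurable (φ v) := by
    intro v
    apply hσcont.measurable.comp
    exact ((((continuous_subtype_val.inner continuous_const).measurable).comp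
      measurable_fst).sub (measurable_fst.comp measurable_snd)).div
      (measurable_snd.comp measurable_snd)
  -- pointwise bound
  have hpt : ∀ ω, |(∑ i, φ (x i) ω) - (∑ j, φ (y j) ω)| ≤
      (∑ i, |φ (x i) ω - φ (y (τ i)) ω|) + ∑ j ∈ Aᶜ, φ (y j) ω := by
    intro ω
    have hsplit : (∑ j, φ (y j) ω) = (∑ i, φ (y (τ i)) ω) + ∑ j ∈ Aᶜ, φ (y j) ω := by
      rw [← Finset.sum_add_sum_compl A (fun j => φ (y j) ω), hA, Finset.sum_map]
    have heq : (∑ i, φ (x i) ω) - (∑ j, φ (y j) ω) =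
        (∑ i, (φ (x i) ω - φ (y (τ i)) ω)) - ∑ j ∈ Aᶜ, φ (y j) ω := by
      rw [hsplit, Finset.sum_sub_distrib]; ring
    rw [heq]
    calc |(∑ i, (φ (x i) ω - φ (y (τ i)) ω)) - ∑ j ∈ Aᶜ, φ (y j) ω|
        ≤ |∑ i, (φ (x i) ω - φ (y (τ i)) ω)| + |∑ j ∈ Aᶜ, φ (y j) ω| := abs_sub _ _
      _ ≤ (∑ i, |φ (x i) ω - φ (y (τ i)) ω|) + ∑ j ∈ Aᶜ, φ (y j) ω := by
          gcongr
          · exact Finset.abs_sum_le_sum_abs _ _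
          · rw [abs_of_nonneg (Finset.sum_nonneg fun j _ => hσ0 _)]
    done
  -- lintegral bound
  have hlin : ∫⁻ ω, ENNReal.ofReal |(∑ i, φ (x i) ω) - (∑ j, φ (y j) ω)| ∂μ
      ≤ ENNReal.ofReal (C * wAug z x y) := by
    have hFm : ∀ i : Fin M, Measurable fun ω => ENNReal.ofReal |φ (x i) ω - φ (y (τ i)) ω| :=
      fun i => ENNReal.measurable_ofReal.comp (((hφm (x i)).sub (hφm (y (τ i)))).abs)
    have hGm : ∀ j : Fin N, Measurable fun ω => ENNReal.ofReal (φ (y j) ω) :=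
      fun j => ENNReal.measurable_ofReal.comp (hφm (y j))
    calc ∫⁻ ω, ENNReal.ofReal |(∑ i, φ (x i) ω) - (∑ j, φ (y j) ω)| ∂μ
        ≤ ∫⁻ ω, ((∑ i, ENNReal.ofReal |φ (x i) ω - φ (y (τ i)) ω|) +
            ∑ j ∈ Aᶜ, ENNReal.ofReal (φ (y j) ω)) ∂μ := by
          apply lintegral_mono
          intro ω
          calc ENNReal.ofReal |(∑ i, φ (x i) ω) - (∑ j, φ (y j) ω)|
              ≤ ENNReal.ofReal ((∑ i, |φ (x i) ω - φ (y (τ i)) ω|) + ∑ j ∈ Aᶜ, φ (y j) ω) :=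
                ENNReal.ofReal_le_ofReal (hpt ω)
            _ = (∑ i, ENNReal.ofReal |φ (x i) ω - φ (y (τ i)) ω|) +
                ∑ j ∈ Aᶜ, ENNReal.ofReal (φ (y j) ω) := by
                rw [ENNReal.ofReal_add (Finset.sum_nonneg fun _ _ => abs_nonneg _)
                  (Finset.sum_nonneg fun _ _ => hσ0 _),
                  ENNReal.ofReal_sum_of_nonneg (fun _ _ => abs_nonneg _),
                  ENNReal.ofReal_sum_of_nonneg (fun _ _ => hσ0 _)]
      _ = (∑ i, ∫⁻ ω, ENNReal.ofReal |φ (x i) ω - φ (y (τ i)) ω| ∂μ) +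
          ∑ j ∈ Aᶜ, ∫⁻ ω, ENNReal.ofReal (φ (y j) ω) ∂μ := by
          rw [lintegral_add_left (Finset.measurable_sum _ fun i _ => hFm i),
            lintegral_finset_sum _ (fun i _ => hFm i),
            lintegral_finset_sum _ (fun j _ => hGm j)]
      _ ≤ (∑ i, ENNReal.ofReal (C * ‖x i - y (τ i)‖)) +
          ∑ j ∈ Aᶜ, ENNReal.ofReal (C * ‖y j - z‖) := by
          gcongr with i hi j hj
          · refine (key_pair hκ₂.le hR hsupp hσlip hσcont.measurable (x i) (y (τ i))).trans
              (ENNReal.ofReal_le_ofReal ?_)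
            exact mul_le_mul_of_nonneg_right hC1 (norm_nonneg _)
          · refine (key_single hB hσcont.measurable (y j)).trans (ENNReal.ofReal_le_ofReal ?_)
            have h2 : (2:ℝ) ≤ ‖y j - z‖ := by
              have h3 : ‖z‖ - ‖y j‖ ≤ ‖z - y j‖ := norm_sub_norm_le _ _
              have h4 : ‖z - y j‖ = ‖y j - z‖ := norm_sub_rev _ _
              have h5 : ‖y j‖ ≤ 1 := hVnorm _ (hy j)
              linarith
            calc B ≤ C := hCB
              _ ≤ C * 2 := by linarith
              _ ≤ C * ‖y j - z‖ := mul_le_mul_of_nonneg_left h2 hC0.le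
      _ = ENNReal.ofReal (C * S1) + ENNReal.ofReal (C * S2) := by
          rw [← ENNReal.ofReal_sum_of_nonneg
              (fun _ _ => mul_nonneg hC0.le (norm_nonneg _)),
            ← ENNReal.ofReal_sum_of_nonneg
              (fun _ _ => mul_nonneg hC0.le (norm_nonneg _)),
            ← Finset.mul_sum, ← Finset.mul_sum]
      _ = ENNReal.ofReal (C * wAug z x y) := by
          rw [← ENNReal.ofReal_add (mul_nonneg hC0.le hS10) (mul_nonneg hC0.le hS20),
            hWaug, mul_add]
  -- convert Bochner integral
  have hASM : AEStronglyMeasurable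
      (fun ω => |(∑ i, φ (x i) ω) - (∑ j, φ (y j) ω)|) μ := by
    apply Measurable.aestronglyMeasurable
    exact ((Finset.measurable_sum _ fun i _ => hφm (x i)).sub
      (Finset.measurable_sum _ fun j _ => hφm (y j))).abs
  have hfinal : (∫ ω, |(∑ i, φ (x i) ω) - (∑ j, φ (y j) ω)| ∂μ) ≤ C * wAug z x y :=
    calc (∫ ω, |(∑ i, φ (x i) ω) - (∑ j, φ (y j) ω)| ∂μ)
        = (∫⁻ ω, ENNReal.ofReal |(∑ i, φ (x i) ω) - (∑ j, φ (y j) ω)| ∂μ).toReal :=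
          integral_eq_lintegral_of_nonneg_ae (Filter.Eventually.of_forall fun ω => abs_nonneg _)
            hASM
      _ ≤ C * wAug z x y := ENNReal.toReal_le_of_le_ofReal
          (by rw [hWaug]; exact mul_nonneg hC0.le (add_nonneg hS10 hS20)) hlin
  simpa only [hφ] using hfinal
end

section
/- Let m, n be natural numbers with n ≥ 3^{2^m}, and let v_1, ..., v_n ∈ ℝ^m. Then there exist indices i < j < k such that for every coordinate ℓ ∈ {1, ..., m}, either v_i[ℓ] ≤ v_j[ℓ] ≤ v_k[ℓ] or v_i[ℓ] ≥ v_j[ℓ] ≥ v_k[ℓ]. -/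
/-!
For one coordinate this is the Erdős–Szekeres theorem: label each index `i` by the length
`L i` of the longest monotone subsequence ending at `i`. If all labels are at most `r`, some
label is shared by more than `#s / r` indices, and these form a strictly decreasing subsequence,
since `i < j` with `f i ≤ f j` forces `L i < L j`. Hence among `K ^ 2` terms there are always
`K` forming a monotone or an antitone subsequence. Applying this once per coordinate shrinks
`3 ^ 2 ^ m` indices to `3` on which every coordinate is monotone or antitone.
-/

open Finset

section ErdosSzekeres

variable {ι α : Type*} [LinearOrder ι] [LinearOrder α] {f : ι → α} {s t : Finset ι} {i j : ι}

open Classical in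
noncomputable def monotoneEndingAt (f : ι → α) (s : Finset ι) (i : ι) : Finset (Finset ι) :=
  s.powerset.filter fun t => IsGreatest (t : Set ι) i ∧ MonotoneOn f t

theorem mem_monotoneEndingAt :
    t ∈ monotoneEndingAt f s i ↔ t ⊆ s ∧ IsGreatest (t : Set ι) i ∧ MonotoneOn f t := by
  simp [monotoneEndingAt]

noncomputable def longestMonotoneEndingAt (f : ι → α) (s : Finset ι) (i : ι) : ℕ :=
  (monotoneEndingAt f s i).sup card

theorem card_le_longestMonotoneEndingAt (hts : t ⊆ s) (hti : IsGreatest (t : Set ι) i)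
    (hft : MonotoneOn f t) : #t ≤ longestMonotoneEndingAt f s i :=
  le_sup (mem_monotoneEndingAt.2 ⟨hts, hti, hft⟩)

theorem exists_card_eq_longestMonotoneEndingAt (hi : i ∈ s) :
    ∃ t ⊆ s, IsGreatest (t : Set ι) i ∧ MonotoneOn f t ∧ #t = longestMonotoneEndingAt f s i := by
  obtain ⟨t, ht, heq⟩ := exists_mem_eq_sup (monotoneEndingAt f s i)
    ⟨{i}, mem_monotoneEndingAt.2 ⟨singleton_subset_iff.2 hi, by simp [isGreatest_singleton]⟩⟩ card
  obtain ⟨hts, hti, hft⟩ := mem_monotoneEndingAt.1 ht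
  exact ⟨t, hts, hti, hft, heq.symm⟩

theorem one_le_longestMonotoneEndingAt (hi : i ∈ s) : 1 ≤ longestMonotoneEndingAt f s i :=
  card_singleton i ▸ card_le_longestMonotoneEndingAt (singleton_subset_iff.2 hi)
    (by simp) (by simp)

theorem longestMonotoneEndingAt_le {r : ℕ} (hi : i ∈ s)
    (hr : ∀ t ⊆ s, MonotoneOn f t → #t ≤ r) : longestMonotoneEndingAt f s i ≤ r := by
  obtain ⟨t, hts, -, hft, heq⟩ := exists_card_eq_longestMonotoneEndingAt (f := f) hi
  exact heq ▸ hr t hts hft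

theorem longestMonotoneEndingAt_lt (hi : i ∈ s) (hj : j ∈ s) (hij : i < j) (hfij : f i ≤ f j) :
    longestMonotoneEndingAt f s i < longestMonotoneEndingAt f s j := by
  obtain ⟨t, hts, hti, hft, heq⟩ := exists_card_eq_longestMonotoneEndingAt (f := f) hi
  have hjt : j ∉ t := fun hj' => (hti.2 hj').not_gt hij
  have hmono : MonotoneOn f ↑(insert j t) := by
    rw [coe_insert, Set.monotoneOn_insert_iff]
    exact ⟨fun b hb _ => (hft hb hti.1 (hti.2 hb)).trans hfij,
      fun b hb hjb => absurd ((hti.2 hb).trans_lt hij) hjb.not_gt, hft⟩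
  have hgreatest : IsGreatest (↑(insert j t) : Set ι) j := by
    simpa [max_eq_left hij.le] using hti.insert j
  calc longestMonotoneEndingAt f s i < #(insert j t) := heq ▸ card_lt_card (ssubset_insert hjt)
    _ ≤ longestMonotoneEndingAt f s j :=
        card_le_longestMonotoneEndingAt (insert_subset hj hts) hgreatest hmono

theorem exists_monotoneOn_or_strictAntiOn_of_mul_lt_card (f : ι → α) {r k : ℕ}
    (h : r * k < #s) :
    (∃ t ⊆ s, r < #t ∧ MonotoneOn f t) ∨ ∃ t ⊆ s, k < #t ∧ StrictAntiOn f t := by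
  classical
  refine or_iff_not_imp_left.2 fun hmono => ?_
  have hr : ∀ t ⊆ s, MonotoneOn f t → #t ≤ r := fun t hts hft =>
    not_lt.1 fun hrt => hmono ⟨t, hts, hrt, hft⟩
  obtain ⟨y, -, hy⟩ := exists_lt_card_fiber_of_mul_lt_card_of_maps_to
    (f := longestMonotoneEndingAt f s) (t := Icc 1 r)
    (fun i hi => mem_Icc.2 ⟨one_le_longestMonotoneEndingAt hi, longestMonotoneEndingAt_le hi hr⟩)
    (by simpa using h)
  refine ⟨_, filter_subset _ s, hy, fun i hi j hj hij => lt_of_not_ge fun hfij => ?_⟩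
  simp only [coe_filter, Set.mem_ofPred_eq] at hi hj
  exact (longestMonotoneEndingAt_lt hi.1 hj.1 hij hfij).ne (hi.2.trans hj.2.symm)

theorem exists_subset_monotoneOn_or_antitoneOn (f : ι → α) {K : ℕ}
    (h : (K - 1) * (K - 1) < #s) :
    ∃ t ⊆ s, K ≤ #t ∧ (MonotoneOn f t ∨ AntitoneOn f t) := by
  rcases exists_monotoneOn_or_strictAntiOn_of_mul_lt_card f h with
    ⟨t, hts, ht, hft⟩ | ⟨t, hts, ht, hft⟩
  exacts [⟨t, hts, by omega, .inl hft⟩, ⟨t, hts, by omega, .inr hft.antitoneOn⟩]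

theorem exists_subset_forall_monotoneOn_or_antitoneOn {κ : Type*} (v : ι → κ → α)
    (L : Finset κ) {K : ℕ} (h : K ^ 2 ^ #L ≤ #s) :
    ∃ t ⊆ s, K ≤ #t ∧ ∀ l ∈ L, MonotoneOn (v · l) t ∨ AntitoneOn (v · l) t := by
  classical
  induction L using Finset.induction_on generalizing K with
  | empty => exact ⟨s, subset_rfl, by simpa using h, by simp⟩
  | insert a L haL ih =>
    rcases Nat.eq_zero_or_pos K with rfl | hK
    · exact ⟨∅, empty_subset s, le_rfl, fun l _ => .inl (by simp [MonotoneOn])⟩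
    obtain ⟨t, hts, ht, hvt⟩ := ih (K := K * K) (by
      rwa [← sq, ← pow_mul, ← pow_succ', ← card_insert_of_notMem haL])
    have hKt : (K - 1) * (K - 1) < #t :=
      (Nat.mul_self_lt_mul_self (Nat.sub_lt hK one_pos)).trans_le ht
    obtain ⟨u, hut, hu, hvu⟩ := exists_subset_monotoneOn_or_antitoneOn (v · a) hKt
    refine ⟨u, hut.trans hts, hu, ?_⟩
    simp only [mem_insert, forall_eq_or_imp]
    exact ⟨hvu, fun l hl => (hvt l hl).imp (·.mono (coe_subset.2 hut))
      (·.mono (coe_subset.2 hut))⟩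

theorem exists_lt_lt_of_three_le_card (h : 3 ≤ #s) :
    ∃ i ∈ s, ∃ j ∈ s, ∃ k ∈ s, i < j ∧ j < k := by
  let e := s.orderEmbOfFin rfl
  exact ⟨e ⟨0, by omega⟩, orderEmbOfFin_mem .., e ⟨1, by omega⟩, orderEmbOfFin_mem ..,
    e ⟨2, by omega⟩, orderEmbOfFin_mem .., e.strictMono (by simp [Fin.lt_def]),
    e.strictMono (by simp [Fin.lt_def])⟩

end ErdosSzekeres

/-- Coordinatewise-monotone triple extraction (iterated Erdős–Szekeres): if
`n ≥ 3^(2^m)` and `v_1, …, v_n ∈ ℝ^m`, there are indices `i < j < k` such that in every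
coordinate `ℓ`, either `v_i[ℓ] ≤ v_j[ℓ] ≤ v_k[ℓ]` or `v_i[ℓ] ≥ v_j[ℓ] ≥ v_k[ℓ]`. -/
theorem stmt18 (m n : ℕ) (h : 3 ^ 2 ^ m ≤ n) (v : Fin n → Fin m → ℝ) :
    ∃ i j k : Fin n, i < j ∧ j < k ∧
      ∀ l : Fin m, (v i l ≤ v j l ∧ v j l ≤ v k l) ∨ (v k l ≤ v j l ∧ v j l ≤ v i l) := by
  obtain ⟨t, -, ht, hvt⟩ :=
    exists_subset_forall_monotoneOn_or_antitoneOn v univ (s := univ) (K := 3) (by simpa using h)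
  obtain ⟨i, hi, j, hj, k, hk, hij, hjk⟩ := exists_lt_lt_of_three_le_card ht
  refine ⟨i, j, k, hij, hjk, fun l => Set.mem_uIcc.1 ?_⟩
  rcases hvt l (mem_univ l) with hl | hl
  exacts [Set.mem_uIcc_of_le (hl hi hj hij.le) (hl hj hk hjk.le),
    Set.mem_uIcc_of_ge (hl hj hk hjk.le) (hl hi hj hij.le)]
end
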